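/- arXiv:2305.17567 — 7 statements merged into one kernel-verified Lean document; each statement's English description precedes it below -/
import Mathlib

section
/- There exists exactly one stationary Nash equilibrium; that is, there is a unique vector p** = (p_H**, p_L**) with positive entries satisfying G_H(p**, p**) = 0 and G_L(p**, p**) = 0 (equivalently, p_i** = 1/((b_i + c_i)·(1 − d_i(p**, p**))) for both i ∈ {H, L}). -/
open Real Filter

/-- Deterministic utility u_i(p_i, r_i) = a_i - b_i * p_i + c_i * (r_i - p_i). -/
noncomputable def util (a b c pi ri : ℝ) : ℝ := a - b * pi + c * (ri - pi)

/-- MNL demand of product H. -/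
noncomputable def demH (aH aL bH bL cH cL : ℝ) (p r : ℝ × ℝ) : ℝ :=
  Real.exp (util aH bH cH p.1 r.1) /
    (1 + Real.exp (util aH bH cH p.1 r.1) + Real.exp (util aL bL cL p.2 r.2))

/-- MNL demand of product L. -/
noncomputable def demL (aH aL bH bL cH cL : ℝ) (p r : ℝ × ℝ) : ℝ :=
  Real.exp (util aL bL cL p.2 r.2) /
    (1 + Real.exp (util aH bH cH p.1 r.1) + Real.exp (util aL bL cL p.2 r.2))

/-- Scaled derivative of the log-revenue of firm H. -/
noncomputable def GrH (aH aL bH bL cH cL : ℝ) (p r : ℝ × ℝ) : ℝ :=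
  1 / ((bH + cH) * p.1) + demH aH aL bH bL cH cL p r - 1

/-- Scaled derivative of the log-revenue of firm L. -/
noncomputable def GrL (aH aL bH bL cH cL : ℝ) (p r : ℝ × ℝ) : ℝ :=
  1 / ((bL + cL) * p.2) + demL aH aL bH bL cH cL p r - 1

/-- Stationary Nash equilibrium: positive price vector on which both scaled
derivatives vanish at price = reference price. -/
def IsSNE (aH aL bH bL cH cL : ℝ) (p : ℝ × ℝ) : Prop :=
  0 < p.1 ∧ 0 < p.2 ∧ GrH aH aL bH bL cH cL p p = 0 ∧ GrL aH aL bH bL cH cL p p = 0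

/-- Projection onto the interval [lo, hi]. -/
noncomputable def proj (lo hi x : ℝ) : ℝ := min (max x lo) hi

/-- Membership of a price vector in P² = [lo, hi]². -/
def InP2 (lo hi : ℝ) (x : ℝ × ℝ) : Prop := x.1 ∈ Set.Icc lo hi ∧ x.2 ∈ Set.Icc lo hi

/-- Squared Euclidean norm on ℝ². -/
noncomputable def norm2sq (x : ℝ × ℝ) : ℝ := x.1 ^ 2 + x.2 ^ 2

/-- The OPGA dynamics for price path `pp` and reference-price path `rr`. -/
def OPGA (aH aL bH bL cH cL lo hi alpha : ℝ) (eta : ℕ → ℝ) (pp rr : ℕ → ℝ × ℝ) : Prop :=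
  (∀ t, (pp (t+1)).1 =
      proj lo hi ((pp t).1 + eta t * (bH + cH) * GrH aH aL bH bL cH cL (pp t) (rr t))) ∧
  (∀ t, (pp (t+1)).2 =
      proj lo hi ((pp t).2 + eta t * (bL + cL) * GrL aH aL bH bL cH cL (pp t) (rr t))) ∧
  (∀ t, (rr (t+1)).1 = alpha * (rr t).1 + (1 - alpha) * (pp t).1) ∧
  (∀ t, (rr (t+1)).2 = alpha * (rr t).2 + (1 - alpha) * (pp t).2)

/-- The weighted ℓ¹ distance to the SNE. -/
noncomputable def wdist (bH bL cH cL : ℝ) (pstar p : ℝ × ℝ) : ℝ :=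
  |pstar.1 - p.1| / (bH + cH) + |pstar.2 - p.2| / (bL + cL)

/-- The function 𝒢(p) = sign(p_H** − p_H)·G_H(p,p) + sign(p_L** − p_L)·G_L(p,p). -/
noncomputable def calG (aH aL bH bL cH cL : ℝ) (pstar p : ℝ × ℝ) : ℝ :=
  Real.sign (pstar.1 - p.1) * GrH aH aL bH bL cH cL p p +
  Real.sign (pstar.2 - p.2) * GrL aH aL bH bL cH cL p p

/-- The function ℋ(p) used in the local analysis around the SNE. -/
noncomputable def calH (aH aL bH bL cH cL : ℝ) (pstar p : ℝ × ℝ) : ℝ :=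
  (bH + cH) * GrH aH aL bH bL cH cL p p * (pstar.1 - p.1) +
  (bL + cL) * GrL aH aL bH bL cH cL p p * (pstar.2 - p.2)

/-- The constant M_G bounding |G_i| on P². -/
noncomputable def MG (bH bL cH cL lo : ℝ) : ℝ :=
  max (1 / ((bH + cH) * lo)) (1 / ((bL + cL) * lo)) + 1

/-- The Lipschitz constant l_r = (1/4)·√(c_H² + c_L²). -/
noncomputable def lr (cH cL : ℝ) : ℝ := (1 / 4) * Real.sqrt (cH ^ 2 + cL ^ 2)

/-!
Along the diagonal `r = p` the reference effect vanishes. Put `βᵢ = bᵢ + cᵢ`, `γᵢ = bᵢ / βᵢ`,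
`xᵢ = βᵢ pᵢ` and let `D = exp s` be the MNL denominator. The condition `Gᵢ = 0` says
`1 / xᵢ = 1 - dᵢ`; writing `xᵢ = 1 + exp t` (so `t` is the log-odds of `dᵢ`) and taking logarithms
of `dᵢ = exp (aᵢ - bᵢ pᵢ) / D` it becomes `sneMap γᵢ t = aᵢ - s`. As `sneMap γᵢ` is an increasing
bijection of `ℝ`, this determines `xᵢ` as a decreasing function of `s`. The remaining condition
`D = 1 + exp u_H + exp u_L` is then `1 / x_H + 1 / x_L = 1 + exp (-s)`, whose defect is strictly
increasing in `s`, negative at `s = 0` and tends to `1`: it has exactly one root.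
-/

noncomputable def sneMap (γ t : ℝ) : ℝ := γ * (1 + exp t) - log (1 + exp (-t))

lemma sneMap_strictMono {γ : ℝ} (hγ : 0 ≤ γ) : StrictMono (sneMap γ) := by
  intro s t hst
  have hprice : γ * (1 + exp s) ≤ γ * (1 + exp t) := by gcongr
  have hlog : log (1 + exp (-t)) < log (1 + exp (-s)) := by gcongr
  unfold sneMap
  linarith

lemma continuous_sneMap (γ : ℝ) : Continuous (sneMap γ) :=
  (by fun_prop : Continuous fun t => γ * (1 + exp t)).sub
    ((by fun_prop : Continuous fun t => 1 + exp (-t)).log fun _ => by positivity)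

lemma tendsto_sneMap_atTop {γ : ℝ} (hγ : 0 < γ) : Tendsto (sneMap γ) atTop atTop := by
  have hlog : Tendsto (fun t => -log (1 + exp (-t))) atTop (nhds (-log (1 + 0))) :=
    ((tendsto_exp_neg_atTop_nhds_zero.const_add 1).log (by norm_num)).neg
  have hprice : Tendsto (fun t => γ * (1 + exp t)) atTop atTop :=
    (tendsto_atTop_add_const_left _ 1 tendsto_exp_atTop).const_mul_atTop hγ
  exact hprice.atTop_add hlog

lemma sneMap_le (γ t : ℝ) : sneMap γ t ≤ γ * (1 + exp t) + t := by
  have : -t ≤ log (1 + exp (-t)) := by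
    simpa using log_le_log (exp_pos (-t)) (by linarith : exp (-t) ≤ 1 + exp (-t))
  unfold sneMap
  linarith

lemma tendsto_sneMap_atBot (γ : ℝ) : Tendsto (sneMap γ) atBot atBot := by
  have hprice : Tendsto (fun t => γ * (1 + exp t)) atBot (nhds (γ * (1 + 0))) :=
    (tendsto_exp_atBot.const_add 1).const_mul γ
  exact tendsto_atBot_mono (sneMap_le γ) ((tendsto_id.atBot_add hprice).congr fun _ => add_comm _ _)

noncomputable def sneIso (γ : ℝ) (hγ : 0 < γ) : ℝ ≃o ℝ :=
  StrictMono.orderIsoOfSurjective (sneMap γ) (sneMap_strictMono hγ.le)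
    ((continuous_sneMap γ).surjective (tendsto_sneMap_atTop hγ) (tendsto_sneMap_atBot γ))

lemma sneMap_sneIso_symm {γ : ℝ} (hγ : 0 < γ) (y : ℝ) : sneMap γ ((sneIso γ hγ).symm y) = y := by
  conv_rhs => rw [← (sneIso γ hγ).apply_symm_apply y]
  rw [sneIso, StrictMono.coe_orderIsoOfSurjective]

lemma exp_neg_log_one_add_exp_neg (t : ℝ) : exp (-log (1 + exp (-t))) = 1 - 1 / (1 + exp t) := by
  rw [exp_neg, exp_log (by positivity), exp_neg]
  field_simp
  ring

lemma foc_iff_sneMap_eq {γ a t S : ℝ} (hS : 0 < S) :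
    1 / (1 + exp t) + exp (a - γ * (1 + exp t)) / S = 1 ↔ sneMap γ t = a - log S := by
  rw [← eq_sub_iff_add_eq', ← exp_log hS, ← exp_sub, log_exp, ← exp_neg_log_one_add_exp_neg,
    exp_eq_exp, sneMap]
  constructor <;> intro h <;> linarith

/-- `(b + c) p` for the price `p` satisfying a firm's first-order condition when the MNL
denominator is `exp s`. -/
noncomputable def scaledPrice (γ : ℝ) (hγ : 0 < γ) (a s : ℝ) : ℝ :=
  1 + exp ((sneIso γ hγ).symm (a - s))

section scaledPrice

variable {γ : ℝ} (hγ : 0 < γ) (a : ℝ)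

lemma one_lt_scaledPrice (s : ℝ) : 1 < scaledPrice γ hγ a s :=
  lt_add_of_pos_right 1 (exp_pos _)

lemma scaledPrice_pos (s : ℝ) : 0 < scaledPrice γ hγ a s :=
  zero_lt_one.trans (one_lt_scaledPrice hγ a s)

lemma one_div_scaledPrice_lt_one (s : ℝ) : 1 / scaledPrice γ hγ a s < 1 :=
  (div_lt_one (scaledPrice_pos hγ a s)).2 (one_lt_scaledPrice hγ a s)

lemma scaledPrice_strictAnti : StrictAnti (scaledPrice γ hγ a) := fun s t hst => by
  unfold scaledPrice
  gcongr

lemma continuous_scaledPrice : Continuous (scaledPrice γ hγ a) :=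
  continuous_const.add <| continuous_exp.comp <|
    (sneIso γ hγ).symm.continuous.comp (continuous_const.sub continuous_id)

lemma one_div_scaledPrice_strictMono : StrictMono fun s => 1 / scaledPrice γ hγ a s :=
  fun _ t hst => one_div_lt_one_div_of_lt (scaledPrice_pos hγ a t) (scaledPrice_strictAnti hγ a hst)

lemma continuous_one_div_scaledPrice : Continuous fun s => 1 / scaledPrice γ hγ a s :=
  continuous_const.div (continuous_scaledPrice hγ a) fun s => (scaledPrice_pos hγ a s).ne'

lemma tendsto_scaledPrice_atTop : Tendsto (scaledPrice γ hγ a) atTop (nhds 1) := by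
  have hlim := (tendsto_exp_atBot.comp <| (sneIso γ hγ).symm.tendsto_atBot.comp <|
    tendsto_atBot_add_const_left _ a tendsto_neg_atTop_atBot).const_add 1
  rw [add_zero] at hlim
  exact hlim

lemma foc_scaledPrice (s : ℝ) :
    1 / scaledPrice γ hγ a s + exp (a - γ * scaledPrice γ hγ a s) / exp s = 1 := by
  rw [scaledPrice, foc_iff_sneMap_eq (exp_pos s), log_exp, sneMap_sneIso_symm]

lemma scaledPrice_log_eq_of_foc {x S : ℝ} (hx : 0 < x) (hS : 0 < S)
    (hfoc : 1 / x + exp (a - γ * x) / S = 1) : scaledPrice γ hγ a (log S) = x := by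
  have hx1 : 1 < x := by
    have : 0 < exp (a - γ * x) / S := by positivity
    rw [← div_lt_one hx]
    linarith
  have hxt : 1 + exp (log (x - 1)) = x := by
    rw [exp_log (by linarith)]
    ring
  rw [← hxt, foc_iff_sneMap_eq hS] at hfoc
  rw [scaledPrice, ((sneIso γ hγ).symm_apply_eq).2, hxt]
  rw [sneIso, StrictMono.coe_orderIsoOfSurjective, hfoc]

end scaledPrice

noncomputable def sneResidual {γH γL : ℝ} (hγH : 0 < γH) (hγL : 0 < γL) (aH aL s : ℝ) : ℝ :=
  1 / scaledPrice γH hγH aH s + 1 / scaledPrice γL hγL aL s - 1 - exp (-s)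

section sneResidual

variable {γH γL : ℝ} (hγH : 0 < γH) (hγL : 0 < γL) (aH aL : ℝ)

lemma sneResidual_strictMono : StrictMono (sneResidual hγH hγL aH aL) := fun s t hst => by
  have hH := one_div_scaledPrice_strictMono hγH aH hst
  have hL := one_div_scaledPrice_strictMono hγL aL hst
  have hexp : exp (-t) < exp (-s) := exp_lt_exp.2 (neg_lt_neg hst)
  unfold sneResidual
  linarith

lemma continuous_sneResidual : Continuous (sneResidual hγH hγL aH aL) :=
  (((continuous_one_div_scaledPrice hγH aH).add (continuous_one_div_scaledPrice hγL aL)).sub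
    continuous_const).sub (continuous_exp.comp continuous_neg)

lemma sneResidual_zero_neg : sneResidual hγH hγL aH aL 0 < 0 := by
  have hH := one_div_scaledPrice_lt_one hγH aH 0
  have hL := one_div_scaledPrice_lt_one hγL aL 0
  rw [sneResidual, neg_zero, exp_zero]
  linarith

lemma tendsto_sneResidual_atTop : Tendsto (sneResidual hγH hγL aH aL) atTop (nhds 1) := by
  have hlim := ((((tendsto_scaledPrice_atTop hγH aH).inv₀ one_ne_zero).add
    ((tendsto_scaledPrice_atTop hγL aL).inv₀ one_ne_zero)).sub_const 1).sub
    tendsto_exp_neg_atTop_nhds_zero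
  norm_num at hlim
  unfold sneResidual
  simpa using hlim

lemma exists_sneResidual_eq_zero : ∃ s, sneResidual hγH hγL aH aL s = 0 := by
  obtain ⟨s₁, hs₁⟩ :=
    ((tendsto_sneResidual_atTop hγH hγL aH aL).eventually (lt_mem_nhds zero_lt_one)).exists
  exact intermediate_value_univ 0 s₁ (continuous_sneResidual hγH hγL aH aL)
    ⟨(sneResidual_zero_neg hγH hγL aH aL).le, hs₁.le⟩

end sneResidual

lemma one_add_add_eq_of_foc {xH xL eH eL S : ℝ} (hS : S ≠ 0) (hH : 1 / xH + eH / S = 1)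
    (hL : 1 / xL + eL / S = 1) (hsum : 1 / xH + 1 / xL - 1 - 1 / S = 0) : 1 + eH + eL = S := by
  have hshares : eH / S + eL / S = 1 - 1 / S := by linarith
  field_simp at hshares
  linarith

lemma GrH_diag (aH aL bH bL cH cL : ℝ) (p : ℝ × ℝ) :
    GrH aH aL bH bL cH cL p p = 1 / ((bH + cH) * p.1) + exp (aH - bH * p.1) /
      (1 + exp (aH - bH * p.1) + exp (aL - bL * p.2)) - 1 := by
  simp [GrH, demH, util]

lemma GrL_diag (aH aL bH bL cH cL : ℝ) (p : ℝ × ℝ) :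
    GrL aH aL bH bL cH cL p p = 1 / ((bL + cL) * p.2) + exp (aL - bL * p.2) /
      (1 + exp (aH - bH * p.1) + exp (aL - bL * p.2)) - 1 := by
  simp [GrL, demL, util]

lemma exists_sneResidual_eq_zero_of_isSNE {aH aL bH bL cH cL : ℝ} (hβH : 0 < bH + cH)
    (hβL : 0 < bL + cL) (hγH : 0 < bH / (bH + cH)) (hγL : 0 < bL / (bL + cL)) {q : ℝ × ℝ}
    (hq : IsSNE aH aL bH bL cH cL q) : ∃ s, sneResidual hγH hγL aH aL s = 0 ∧
      q = (scaledPrice _ hγH aH s / (bH + cH), scaledPrice _ hγL aL s / (bL + cL)) := by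
  obtain ⟨hq₁, hq₂, hH, hL⟩ := hq
  rw [GrH_diag] at hH
  rw [GrL_diag] at hL
  set eH := exp (aH - bH * q.1)
  set eL := exp (aL - bL * q.2)
  set D := 1 + eH + eL
  have hD : 0 < D := by positivity
  have hpriceH : scaledPrice _ hγH aH (log D) = (bH + cH) * q.1 := by
    refine scaledPrice_log_eq_of_foc hγH aH (mul_pos hβH hq₁) hD ?_
    rw [show bH / (bH + cH) * ((bH + cH) * q.1) = bH * q.1 by field_simp]
    linarith
  have hpriceL : scaledPrice _ hγL aL (log D) = (bL + cL) * q.2 := by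
    refine scaledPrice_log_eq_of_foc hγL aL (mul_pos hβL hq₂) hD ?_
    rw [show bL / (bL + cL) * ((bL + cL) * q.2) = bL * q.2 by field_simp]
    linarith
  refine ⟨log D, ?_, ?_⟩
  · have hshares : (1 + eH + eL) / D = 1 := div_self hD.ne'
    rw [add_div, add_div] at hshares
    rw [sneResidual, hpriceH, hpriceL, exp_neg, exp_log hD, inv_eq_one_div]
    linarith
  · rw [hpriceH, hpriceL]
    ext <;> field_simp

lemma isSNE_of_sneResidual_eq_zero {aH aL bH bL cH cL : ℝ} (hβH : 0 < bH + cH)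
    (hβL : 0 < bL + cL) (hγH : 0 < bH / (bH + cH)) (hγL : 0 < bL / (bL + cL)) {s : ℝ}
    (hs : sneResidual hγH hγL aH aL s = 0) : IsSNE aH aL bH bL cH cL
      (scaledPrice _ hγH aH s / (bH + cH), scaledPrice _ hγL aL s / (bL + cL)) := by
  have hfocH := foc_scaledPrice hγH aH s
  have hfocL := foc_scaledPrice hγL aL s
  rw [sneResidual, exp_neg, inv_eq_one_div] at hs
  have hD := one_add_add_eq_of_foc (exp_pos s).ne' hfocH hfocL hs
  set xH := scaledPrice _ hγH aH s
  set xL := scaledPrice _ hγL aL s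
  have hpH : bH * (xH / (bH + cH)) = bH / (bH + cH) * xH := by ring
  have hpL : bL * (xL / (bL + cL)) = bL / (bL + cL) * xL := by ring
  refine ⟨div_pos (scaledPrice_pos hγH aH s) hβH, div_pos (scaledPrice_pos hγL aL s) hβL, ?_, ?_⟩
  · rw [GrH_diag]
    dsimp only
    rw [hpH, hpL, mul_div_cancel₀ xH hβH.ne', hD]
    linarith
  · rw [GrL_diag]
    dsimp only
    rw [hpH, hpL, mul_div_cancel₀ xL hβL.ne', hD]
    linarith

theorem unique_SNE (aH aL bH bL cH cL : ℝ)
    (hbH : 0 < bH) (hbL : 0 < bL) (hcH : 0 < cH) (hcL : 0 < cL) :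
    ∃! p : ℝ × ℝ, IsSNE aH aL bH bL cH cL p := by
  have hβH : 0 < bH + cH := add_pos hbH hcH
  have hβL : 0 < bL + cL := add_pos hbL hcL
  have hγH : 0 < bH / (bH + cH) := div_pos hbH hβH
  have hγL : 0 < bL / (bL + cL) := div_pos hbL hβL
  obtain ⟨s, hs⟩ := exists_sneResidual_eq_zero hγH hγL aH aL
  refine ⟨_, isSNE_of_sneResidual_eq_zero hβH hβL hγH hγL hs, fun q hq => ?_⟩
  obtain ⟨s', hs', rfl⟩ := exists_sneResidual_eq_zero_of_isSNE hβH hβL hγH hγL hq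
  rw [(sneResidual_strictMono hγH hγL aH aL).injective (hs'.trans hs.symm)]
end

section
/- For each i ∈ {H, L}, the equation p = (1 + exp(a_i − b_i·p))/(b_i + c_i) in the real variable p has exactly one real solution p̂_i; this solution is positive, and every stationary Nash equilibrium p** satisfies p_i** < p̂_i. -/
open Real Filter

/-! The threshold `p̂` is the root of the strictly increasing map `x ↦ k x - 1 - exp (a - b x)`,
which is negative at `0` and tends to `+∞`. At an SNE the first-order condition reads
`(b_H + c_H) p_H = 1 + e_H / (1 + e_L)` with `e_i = exp (a_i - b_i p_i)`, so that map is
negative at `p_H**`, whence `p_H** < p̂_H`. -/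

noncomputable def priceGap (a b k x : ℝ) : ℝ := k * x - 1 - Real.exp (a - b * x)

section priceGap

variable {a b k : ℝ}

lemma continuous_priceGap : Continuous (priceGap a b k) := by
  unfold priceGap
  fun_prop

lemma strictMono_priceGap (hb : 0 ≤ b) (hk : 0 < k) : StrictMono (priceGap a b k) := by
  intro x y hxy
  have : Real.exp (a - b * y) ≤ Real.exp (a - b * x) :=
    Real.exp_le_exp.mpr (by nlinarith)
  unfold priceGap
  nlinarith

lemma eq_div_iff_priceGap_eq_zero (hk : k ≠ 0) {x : ℝ} :
    x = (1 + Real.exp (a - b * x)) / k ↔ priceGap a b k x = 0 := by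
  rw [eq_div_iff hk, priceGap, sub_sub, sub_eq_zero, mul_comm]

lemma exists_priceGap_eq_zero (hb : 0 ≤ b) (hk : 0 < k) : ∃ x, priceGap a b k x = 0 := by
  set M := (2 + Real.exp a) / k
  have hM : 0 ≤ M := by positivity
  have h0 : priceGap a b k 0 < 0 := by
    simp only [priceGap, mul_zero, sub_zero]
    linarith [Real.exp_pos a]
  have hMpos : 0 < priceGap a b k M := by
    have : Real.exp (a - b * M) ≤ Real.exp a := Real.exp_le_exp.mpr (by nlinarith)
    simp only [priceGap, M, mul_div_cancel₀ _ hk.ne']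
    linarith
  obtain ⟨x, -, hx⟩ :=
    intermediate_value_Icc hM continuous_priceGap.continuousOn ⟨h0.le, hMpos.le⟩
  exact ⟨x, hx⟩

lemma existsUnique_eq_div (hb : 0 ≤ b) (hk : 0 < k) :
    ∃! x : ℝ, x = (1 + Real.exp (a - b * x)) / k := by
  simp only [eq_div_iff_priceGap_eq_zero hk.ne']
  obtain ⟨x, hx⟩ := exists_priceGap_eq_zero hb hk
  exact ⟨x, hx, fun y hy => (strictMono_priceGap hb hk).injective (hy.trans hx.symm)⟩

lemma pos_of_eq_div (hk : 0 < k) {x : ℝ} (hx : x = (1 + Real.exp (a - b * x)) / k) : 0 < x := by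
  rw [hx]
  positivity

lemma lt_of_mul_lt_of_eq_div (hb : 0 ≤ b) (hk : 0 < k) {x q : ℝ}
    (hx : x = (1 + Real.exp (a - b * x)) / k) (hq : k * q < 1 + Real.exp (a - b * q)) : q < x := by
  rw [eq_div_iff_priceGap_eq_zero hk.ne'] at hx
  refine (strictMono_priceGap (a := a) hb hk).lt_iff_lt.mp ?_
  rw [hx, priceGap]
  linarith

end priceGap

lemma util_self (a b c p : ℝ) : util a b c p p = a - b * p := by
  rw [util, sub_self, mul_zero, add_zero]

lemma lt_one_add_of_inv_add_share_sub_one_eq_zero {x e e' : ℝ} (hx : 0 < x) (he : 0 < e)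
    (he' : 0 < e') (h : 1 / x + e / (1 + e + e') - 1 = 0) : x < 1 + e := by
  field_simp at h
  nlinarith [mul_pos he he']

namespace IsSNE

variable {aH aL bH bL cH cL : ℝ} {p : ℝ × ℝ}

lemma fst_lt (hk : 0 < bH + cH) (h : IsSNE aH aL bH bL cH cL p) :
    (bH + cH) * p.1 < 1 + Real.exp (aH - bH * p.1) := by
  obtain ⟨hp, -, hG, -⟩ := h
  rw [GrH, demH, util_self, util_self] at hG
  exact lt_one_add_of_inv_add_share_sub_one_eq_zero (by positivity) (Real.exp_pos _)
    (Real.exp_pos _) hG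

lemma snd_lt (hk : 0 < bL + cL) (h : IsSNE aH aL bH bL cH cL p) :
    (bL + cL) * p.2 < 1 + Real.exp (aL - bL * p.2) := by
  obtain ⟨-, hp, -, hG⟩ := h
  rw [GrL, demL, util_self, util_self, add_right_comm] at hG
  exact lt_one_add_of_inv_add_share_sub_one_eq_zero (by positivity) (Real.exp_pos _)
    (Real.exp_pos _) hG

end IsSNE

theorem SNE_upper_bound (aH aL bH bL cH cL : ℝ)
    (hbH : 0 < bH) (hbL : 0 < bL) (hcH : 0 < cH) (hcL : 0 < cL) :
    (∃! ph : ℝ, ph = (1 + Real.exp (aH - bH * ph)) / (bH + cH)) ∧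
    (∀ ph : ℝ, ph = (1 + Real.exp (aH - bH * ph)) / (bH + cH) →
      0 < ph ∧ ∀ pstar : ℝ × ℝ, IsSNE aH aL bH bL cH cL pstar → pstar.1 < ph) ∧
    (∃! pl : ℝ, pl = (1 + Real.exp (aL - bL * pl)) / (bL + cL)) ∧
    (∀ pl : ℝ, pl = (1 + Real.exp (aL - bL * pl)) / (bL + cL) →
      0 < pl ∧ ∀ pstar : ℝ × ℝ, IsSNE aH aL bH bL cH cL pstar → pstar.2 < pl) := by
  have hkH : 0 < bH + cH := add_pos hbH hcH
  have hkL : 0 < bL + cL := add_pos hbL hcL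
  refine ⟨existsUnique_eq_div hbH.le hkH, fun ph hph => ⟨pos_of_eq_div hkH hph, ?_⟩,
    existsUnique_eq_div hbL.le hkL, fun pl hpl => ⟨pos_of_eq_div hkL hpl, ?_⟩⟩
  · exact fun pstar h => lt_of_mul_lt_of_eq_div hbH.le hkH hph (h.fst_lt hkH)
  · exact fun pstar h => lt_of_mul_lt_of_eq_div hbL.le hkL hpl (h.snd_lt hkL)
end

section
/- Suppose the step-sizes (η^t) form a nonincreasing sequence of nonnegative reals with η^t → 0 and Σ_{t=0}^∞ η^t = ∞, and suppose the unique stationary Nash equilibrium p** lies in [p̲, p̄]². Then the price path (p^t) and the reference-price path (r^t) generated by the OPGA dynamics both converge to p** as t → ∞. -/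
/-!
Measure the distance to the equilibrium by `D = Σᵢ |p**ᵢ - pᵢ| / (bᵢ + cᵢ)`. On the box the
sign-weighted gradient `Σᵢ sign (p**ᵢ - pᵢ) Gᵢ(p, p)` is at least `D / p̄²`: the own-price terms
`1 / ((bᵢ + cᵢ) pᵢ)` are decreasing and the MNL shares are sign-monotone. Along the dynamics
`Gᵢ(pᵗ, rᵗ)` differs from `Gᵢ(pᵗ, pᵗ)` by `o(1)`, because the reference prices track the prices
geometrically while the steps vanish. A projected step towards a point of the box can overshoot,
but only by a step, so `D` plus the correction `ηᵗ Σᵢ (|Gᵢ| + sign (p**ᵢ - pᵢ) Gᵢ)` satisfies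
`Eₜ₊₁ ≤ (1 - ηᵗ / p̄²) Eₜ + ηᵗ δₜ` with `δₜ → 0`; the variation of `G` along the path that enters
`δₜ` is small by uniform continuity on the compact box. With `Σ ηᵗ = ∞` this forces `Eₜ → 0`.
-/

open Real Filter

open Finset Set

namespace Real

theorem sign_mul_self_eq_abs (x : ℝ) : Real.sign x * x = |x| := by
  rcases lt_trichotomy x 0 with h | rfl | h
  · rw [sign_of_neg h, abs_of_neg h, neg_one_mul]
  · simp
  · rw [sign_of_pos h, abs_of_pos h, one_mul]

theorem abs_sign_mul_le (x y : ℝ) : |Real.sign x * y| ≤ |y| := by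
  rw [abs_mul]
  refine mul_le_of_le_one_left (abs_nonneg y) ?_
  rcases sign_apply_eq x with h | h | h <;> simp [h]

theorem sign_congr {x y : ℝ} (hneg : x < 0 ↔ y < 0) (hpos : 0 < x ↔ 0 < y) :
    Real.sign x = Real.sign y := by
  simp only [Real.sign, hneg, hpos]

theorem sign_mul_of_pos {c : ℝ} (hc : 0 < c) (x : ℝ) : Real.sign (c * x) = Real.sign x :=
  sign_congr (by rw [← neg_pos, ← mul_neg, mul_pos_iff_of_pos_left hc, neg_pos])
    (mul_pos_iff_of_pos_left hc)

theorem sign_exp_sub_exp (a b : ℝ) : Real.sign (exp a - exp b) = Real.sign (a - b) :=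
  sign_congr (by simp only [sub_neg, exp_lt_exp]) (by simp only [sub_pos, exp_lt_exp])

end Real

section ProjectedAscent

variable {lo hi : ℝ}

theorem proj_mem_Icc (h : lo ≤ hi) (x : ℝ) : proj lo hi x ∈ Icc lo hi :=
  ⟨le_min (le_max_right _ _) h, min_le_right _ _⟩

theorem proj_le_self_of_lo_lt (x : ℝ) (h : lo < proj lo hi x) : proj lo hi x ≤ x := by
  simp only [proj, min_def, max_def] at *
  split_ifs at * <;> linarith

theorem le_proj_of_lt_hi (x : ℝ) (h : proj lo hi x < hi) : x ≤ proj lo hi x := by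
  simp only [proj, min_def, max_def] at *
  split_ifs at * <;> linarith

theorem abs_proj_add_sub_le {p : ℝ} (hp : p ∈ Icc lo hi) (g : ℝ) :
    |proj lo hi (p + g) - p| ≤ |g| := by
  obtain ⟨h1, h2⟩ := hp
  rw [abs_le]
  simp only [proj, min_def, max_def]
  split_ifs <;> constructor <;> cases abs_cases g <;> linarith

theorem abs_sub_proj_add_sign_mul_le {q : ℝ} (hq : q ∈ Icc lo hi) (z g : ℝ) :
    |q - proj lo hi (z + g)| + Real.sign (q - proj lo hi (z + g)) * g ≤ |q - z| := by
  set y := proj lo hi (z + g)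
  rcases lt_trichotomy (q - y) 0 with h | h | h
  · have : y ≤ z + g := proj_le_self_of_lo_lt _ (by linarith [hq.1])
    rw [Real.sign_of_neg h, abs_of_neg h]
    linarith [neg_le_abs (q - z)]
  · simp [h]
  · have : z + g ≤ y := le_proj_of_lt_hi _ (by linarith [hq.2])
    rw [Real.sign_of_pos h, abs_of_pos h]
    linarith [le_abs_self (q - z)]

/-- The correction term `η (|u| + sign (q - z) u)` of the potential absorbs the overshooting of
a projected step. -/
theorem proj_ascent_potential_le {q w η η' u u' z : ℝ} (hq : q ∈ Icc lo hi) (hw : 0 < w)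
    (hη' : 0 ≤ η') (hηη' : η' ≤ η) :
    |q - proj lo hi (z + η * w * u)| / w
        + η' * (|u'| + Real.sign (q - proj lo hi (z + η * w * u)) * u')
      ≤ |q - z| / w + η * |u| + 2 * η * |u' - u| := by
  set s := Real.sign (q - proj lo hi (z + η * w * u))
  have hcore : |q - proj lo hi (z + η * w * u)| / w + η * (s * u) ≤ |q - z| / w := by
    have h := abs_sub_proj_add_sign_mul_le hq z (η * w * u)
    rw [div_add' _ _ _ hw.ne', div_le_div_iff_of_pos_right hw]
    linarith
  have hs := abs_le.1 (Real.abs_sign_mul_le (q - proj lo hi (z + η * w * u)) u')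
  have hs' := abs_le.1 (Real.abs_sign_mul_le (q - proj lo hi (z + η * w * u)) (u' - u))
  have hvar : |u'| + s * u' ≤ |u| + s * u + 2 * |u' - u| := by
    have := abs_sub_abs_le_abs_sub u' u
    rw [mul_sub] at hs'
    linarith
  calc _ ≤ |q - proj lo hi (z + η * w * u)| / w + η * (|u'| + s * u') := by
        gcongr; linarith
    _ ≤ |q - proj lo hi (z + η * w * u)| / w + η * (|u| + s * u + 2 * |u' - u|) := by
        gcongr; linarith
    _ ≤ _ := by linarith

end ProjectedAscent

theorem le_mul_exp_neg_sum_of_le_exp_mul {a η : ℕ → ℝ} {κ : ℝ} {T : ℕ}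
    (h : ∀ t ≥ T, a (t + 1) ≤ exp (-(κ * η t)) * a t) :
    ∀ n ≥ T, a n ≤ a T * exp (-(κ * ∑ t ∈ Ico T n, η t)) := by
  intro n hn
  induction n, hn using Nat.le_induction with
  | base => simp
  | succ n hn ih =>
    rw [sum_Ico_succ_top hn, mul_add, neg_add, exp_add, ← mul_assoc]
    calc a (n + 1) ≤ exp (-(κ * η n)) * a n := h n hn
      _ ≤ exp (-(κ * η n)) * (a T * exp (-(κ * ∑ t ∈ Ico T n, η t))) := by gcongr
      _ = _ := by ring

theorem tendsto_zero_of_le_one_sub_mul_add {E η δ : ℕ → ℝ} {κ : ℝ} (hκ : 0 < κ)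
    (hE : ∀ t, 0 ≤ E t) (hη : ∀ t, 0 ≤ η t) (hκη : ∀ᶠ t in atTop, κ * η t ≤ 1)
    (hsum : Tendsto (fun n => ∑ t ∈ range n, η t) atTop atTop)
    (hδ : Tendsto δ atTop (nhds 0))
    (hrec : ∀ t, E (t + 1) ≤ (1 - κ * η t) * E t + η t * δ t) :
    Tendsto E atTop (nhds 0) := by
  refine tendsto_order.2 ⟨fun c hc => Eventually.of_forall fun t => hc.trans_le (hE t),
    fun c hc => ?_⟩
  obtain ⟨T, hT⟩ := eventually_atTop.1
    (hκη.and (hδ.eventually (ge_mem_nhds (mul_pos hκ (half_pos hc)))))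
  set a := fun t => max (E t - c / 2) 0
  have hstep : ∀ t ≥ T, a (t + 1) ≤ exp (-(κ * η t)) * a t := by
    intro t ht
    obtain ⟨h1, h2⟩ := hT t ht
    have hexp : 1 - κ * η t ≤ exp (-(κ * η t)) := by linarith [add_one_le_exp (-(κ * η t))]
    have ha : E t - c / 2 ≤ a t := le_max_left _ _
    refine max_le ?_ (by positivity)
    calc E (t + 1) - c / 2 ≤ (1 - κ * η t) * (E t - c / 2) + η t * (δ t - κ * (c / 2)) := by
          linarith [hrec t]
      _ ≤ (1 - κ * η t) * a t := by
          nlinarith [mul_le_mul_of_nonneg_left ha (sub_nonneg.2 h1), hη t]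
      _ ≤ exp (-(κ * η t)) * a t := by gcongr
  have hlim : Tendsto (fun n => a T * exp (-(κ * ∑ t ∈ Ico T n, η t))) atTop (nhds 0) := by
    have hS : Tendsto (fun n => ∑ t ∈ Ico T n, η t) atTop atTop := by
      refine (tendsto_atTop_add_const_right _ (-∑ t ∈ range T, η t) hsum).congr' ?_
      filter_upwards [eventually_ge_atTop T] with n hn
      rw [sum_Ico_eq_sub _ hn, sub_eq_add_neg]
    simpa using ((Real.tendsto_exp_atBot.comp
      (tendsto_neg_atTop_atBot.comp (hS.const_mul_atTop hκ))).const_mul (a T))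
  filter_upwards [eventually_ge_atTop T, hlim.eventually (gt_mem_nhds (half_pos hc))]
    with n hn hsmall
  have := (le_mul_exp_neg_sum_of_le_exp_mul hstep n hn).trans_lt hsmall
  linarith [le_max_left (E n - c / 2) 0]

theorem tendsto_sum_abs_sub_div_of_proj_ascent {ι : Type*} [Fintype ι] {lo hi κ M : ℝ}
    {η ε : ℕ → ℝ} {w q : ι → ℝ} {z u : ℕ → ι → ℝ}
    (hκ : 0 < κ) (hw : ∀ i, 0 < w i) (hq : ∀ i, q i ∈ Icc lo hi)
    (hη : ∀ t, 0 ≤ η t) (hanti : Antitone η) (hη0 : Tendsto η atTop (nhds 0))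
    (hsum : Tendsto (fun n => ∑ t ∈ range n, η t) atTop atTop)
    (hz : ∀ t i, z (t + 1) i = proj lo hi (z t i + η t * w i * u t i))
    (hu : ∀ t i, |u t i| ≤ M)
    (hΔu : ∀ i, Tendsto (fun t => dist (u (t + 1) i) (u t i)) atTop (nhds 0))
    (hε : Tendsto ε atTop (nhds 0))
    (hkey : ∀ t,
      κ * ∑ i, |q i - z t i| / w i - ε t ≤ ∑ i, Real.sign (q i - z t i) * u t i) :
    Tendsto (fun t => ∑ i, |q i - z t i| / w i) atTop (nhds 0) := by
  set D := fun t => ∑ i, |q i - z t i| / w i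
  set Ψ := fun t => ∑ i, η t * (|u t i| + Real.sign (q i - z t i) * u t i)
  set ζ := fun t => ∑ i, dist (u (t + 1) i) (u t i)
  set N : ℝ := (Fintype.card ι : ℝ)
  have hD : ∀ t, 0 ≤ D t := fun t => sum_nonneg fun i _ => div_nonneg (abs_nonneg _) (hw i).le
  have hΨ : ∀ t, 0 ≤ Ψ t ∧ Ψ t ≤ 2 * N * M * η t := by
    intro t
    have hs := fun i => abs_le.1 (Real.abs_sign_mul_le (q i - z t i) (u t i))
    constructor
    · exact sum_nonneg fun i _ => mul_nonneg (hη t) (by linarith [(hs i).1])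
    · calc Ψ t ≤ ∑ _i : ι, η t * (2 * M) :=
            sum_le_sum fun i _ => mul_le_mul_of_nonneg_left (by linarith [(hs i).2, hu t i]) (hη t)
        _ = 2 * N * M * η t := by simp [N]; ring
  have hstep : ∀ t, D (t + 1) + Ψ (t + 1)
      ≤ D t + Ψ t - η t * ∑ i, Real.sign (q i - z t i) * u t i + 2 * η t * ζ t := by
    intro t
    have h := sum_le_sum fun i (_ : i ∈ Finset.univ) => proj_ascent_potential_le (z := z t i)
      (u := u t i) (u' := u (t + 1) i) (hq i) (hw i) (hη (t + 1)) (hanti t.le_succ)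
    simp only [← hz t, sum_add_distrib, ← mul_sum] at h
    simp only [D, Ψ, ζ, ← mul_sum, sum_add_distrib, Real.dist_eq]
    linarith
  have hE : Tendsto (fun t => D t + Ψ t) atTop (nhds 0) := by
    refine tendsto_zero_of_le_one_sub_mul_add hκ (fun t => add_nonneg (hD t) (hΨ t).1) hη
      (hη0.eventually (ge_mem_nhds (inv_pos.2 hκ)) |>.mono fun t ht => ?_) hsum
      (δ := fun t => ε t + 2 * ζ t + 2 * N * M * κ * η t) ?_ fun t => ?_
    · rwa [← le_div_iff₀' hκ, one_div]
    · simpa using (hε.add ((tendsto_finsetSum _ fun i _ => hΔu i).const_mul 2)).add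
        (hη0.const_mul (2 * N * M * κ))
    · have h1 := mul_le_mul_of_nonneg_left (hkey t) (hη t)
      have h2 := mul_le_mul_of_nonneg_left (hΨ t).2 (mul_nonneg hκ.le (hη t))
      linarith [hstep t]
  exact squeeze_zero hD (fun t => le_add_of_nonneg_right (hΨ t).1) hE

theorem UniformContinuousOn.tendsto_dist_comp {α β : Type*} [PseudoMetricSpace α]
    [PseudoMetricSpace β] {f : α → β} {s : Set α} (hf : UniformContinuousOn f s)
    {x y : ℕ → α} (hx : ∀ t, x t ∈ s) (hy : ∀ t, y t ∈ s)
    (hxy : Tendsto (fun t => dist (x t) (y t)) atTop (nhds 0)) :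
    Tendsto (fun t => dist (f (x t)) (f (y t))) atTop (nhds 0) :=
  tendsto_uniformity_iff_dist_tendsto_zero.1 <| Tendsto.comp hf <| tendsto_inf.2
    ⟨tendsto_uniformity_iff_dist_tendsto_zero.2 hxy,
      tendsto_principal.2 <| Eventually.of_forall fun t => mk_mem_prod (hx t) (hy t)⟩

theorem sign_mul_share_sub_add_nonneg {s t s' t' : ℝ} (hs : 0 ≤ s) (ht : 0 ≤ t)
    (hs' : 0 ≤ s') (ht' : 0 ≤ t') :
    0 ≤ Real.sign (s - s') * (s / (1 + s + t) - s' / (1 + s' + t'))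
      + Real.sign (t - t') * (t / (1 + s + t) - t' / (1 + s' + t')) := by
  have hS : 0 < 1 + s + t := by positivity
  have hS' : 0 < 1 + s' + t' := by positivity
  have e1 : s / (1 + s + t) - s' / (1 + s' + t')
      = ((s - s') * (1 + t') - s' * (t - t')) / ((1 + s + t) * (1 + s' + t')) := by
    field_simp; ring
  have e2 : t / (1 + s + t) - t' / (1 + s' + t')
      = ((t - t') * (1 + s') - t' * (s - s')) / ((1 + s + t) * (1 + s' + t')) := by
    field_simp; ring
  rw [e1, e2, ← mul_div_assoc, ← mul_div_assoc, ← add_div]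
  refine div_nonneg ?_ (by positivity)
  -- the diagonal terms `|s - s'| (1 + t')` dominate the cross terms `s' |t - t'|`
  have h1 := Real.sign_mul_self_eq_abs (s - s')
  have h2 := Real.sign_mul_self_eq_abs (t - t')
  have h3 := (abs_le.1 (Real.abs_sign_mul_le (s - s') (t - t'))).2
  have h4 := (abs_le.1 (Real.abs_sign_mul_le (t - t') (s - s'))).2
  nlinarith [mul_le_mul_of_nonneg_left h3 hs', mul_le_mul_of_nonneg_left h4 ht',
    abs_nonneg (s - s'), abs_nonneg (t - t')]

theorem sign_mul_mnl_sub_add_nonneg (a b a' b' : ℝ) :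
    0 ≤ Real.sign (a - a') * (exp a / (1 + exp a + exp b) - exp a' / (1 + exp a' + exp b'))
      + Real.sign (b - b') * (exp b / (1 + exp a + exp b) - exp b' / (1 + exp a' + exp b')) := by
  rw [← Real.sign_exp_sub_exp a a', ← Real.sign_exp_sub_exp b b']
  exact sign_mul_share_sub_add_nonneg (exp_pos a).le (exp_pos b).le (exp_pos a').le
    (exp_pos b').le

theorem abs_sub_div_le_sign_mul_one_div_sub {B p q h : ℝ} (hB : 0 < B) (hp : 0 < p)
    (hq : 0 < q) (hph : p ≤ h) (hqh : q ≤ h) :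
    |q - p| / B / h ^ 2 ≤ Real.sign (q - p) * (1 / (B * p) - 1 / (B * q)) := by
  have e : 1 / (B * p) - 1 / (B * q) = (q - p) / B / (p * q) := by field_simp
  rw [e, ← mul_div_assoc, ← mul_div_assoc, Real.sign_mul_self_eq_abs, sq]
  gcongr
  linarith

section Model

variable {aH aL bH bL cH cL : ℝ}

theorem continuousOn_GrH (hB : bH + cH ≠ 0) :
    ContinuousOn (fun x : (ℝ × ℝ) × (ℝ × ℝ) => GrH aH aL bH bL cH cL x.1 x.2)
      {x | x.1.1 ≠ 0} := by
  unfold GrH demH util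
  fun_prop (disch := intro x hx; first | positivity | exact mul_ne_zero hB hx)

theorem continuousOn_GrL (hB : bL + cL ≠ 0) :
    ContinuousOn (fun x : (ℝ × ℝ) × (ℝ × ℝ) => GrL aH aL bH bL cH cL x.1 x.2)
      {x | x.1.2 ≠ 0} := by
  unfold GrL demL util
  fun_prop (disch := intro x hx; first | positivity | exact mul_ne_zero hB hx)

/-- At `r = p` the utilities are `a - b p`, so the demand terms contribute nonnegatively by
`sign_mul_mnl_sub_add_nonneg`; the decreasing own-price terms `1 / ((b + c) p)` give `wdist`. -/
theorem wdist_div_sq_le_calG {lo hi : ℝ} (hbH : 0 < bH) (hbL : 0 < bL) (hB1 : 0 < bH + cH)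
    (hB2 : 0 < bL + cL) (hlo : 0 < lo)
    {pstar p : ℝ × ℝ} (hsne : IsSNE aH aL bH bL cH cL pstar) (hstar : InP2 lo hi pstar)
    (hp : InP2 lo hi p) :
    wdist bH bL cH cL pstar p / hi ^ 2 ≤ calG aH aL bH bL cH cL pstar p := by
  obtain ⟨hq1, hq2, hGH, hGL⟩ := hsne
  have hmnl := sign_mul_mnl_sub_add_nonneg (util aH bH cH p.1 p.1) (util aL bL cL p.2 p.2)
    (util aH bH cH pstar.1 pstar.1) (util aL bL cL pstar.2 pstar.2)
  have eH : util aH bH cH p.1 p.1 - util aH bH cH pstar.1 pstar.1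
      = bH * (pstar.1 - p.1) := by unfold util; ring
  have eL : util aL bL cL p.2 p.2 - util aL bL cL pstar.2 pstar.2
      = bL * (pstar.2 - p.2) := by unfold util; ring
  rw [eH, eL, Real.sign_mul_of_pos hbH, Real.sign_mul_of_pos hbL] at hmnl
  have hrH := abs_sub_div_le_sign_mul_one_div_sub hB1 (hlo.trans_le hp.1.1) hq1 hp.1.2 hstar.1.2
  have hrL := abs_sub_div_le_sign_mul_one_div_sub hB2 (hlo.trans_le hp.2.1) hq2 hp.2.2 hstar.2.2
  have gH : GrH aH aL bH bL cH cL p p = (1 / ((bH + cH) * p.1) - 1 / ((bH + cH) * pstar.1))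
      + (demH aH aL bH bL cH cL p p - demH aH aL bH bL cH cL pstar pstar) := by
    unfold GrH at hGH ⊢; linarith
  have gL : GrL aH aL bH bL cH cL p p = (1 / ((bL + cL) * p.2) - 1 / ((bL + cL) * pstar.2))
      + (demL aH aL bH bL cH cL p p - demL aH aL bH bL cH cL pstar pstar) := by
    unfold GrL at hGL ⊢; linarith
  unfold calG wdist
  rw [gH, gL, mul_add, mul_add, add_div]
  unfold demH demL
  linarith

theorem wdist_div_sq_sub_le {lo hi : ℝ} (hbH : 0 < bH) (hbL : 0 < bL) (hB1 : 0 < bH + cH)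
    (hB2 : 0 < bL + cL) (hlo : 0 < lo)
    {pstar p : ℝ × ℝ} (hsne : IsSNE aH aL bH bL cH cL pstar) (hstar : InP2 lo hi pstar)
    (hp : InP2 lo hi p) (r : ℝ × ℝ) :
    wdist bH bL cH cL pstar p / hi ^ 2
        - (dist (GrH aH aL bH bL cH cL p r) (GrH aH aL bH bL cH cL p p)
          + dist (GrL aH aL bH bL cH cL p r) (GrL aH aL bH bL cH cL p p))
      ≤ Real.sign (pstar.1 - p.1) * GrH aH aL bH bL cH cL p r
        + Real.sign (pstar.2 - p.2) * GrL aH aL bH bL cH cL p r := by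
  have h := wdist_div_sq_le_calG hbH hbL hB1 hB2 hlo hsne hstar hp
  have hH := abs_le.1 (Real.abs_sign_mul_le (pstar.1 - p.1)
    (GrH aH aL bH bL cH cL p r - GrH aH aL bH bL cH cL p p))
  have hL := abs_le.1 (Real.abs_sign_mul_le (pstar.2 - p.2)
    (GrL aH aL bH bL cH cL p r - GrL aH aL bH bL cH cL p p))
  unfold calG at h
  rw [Real.dist_eq, Real.dist_eq]
  rw [mul_sub] at hH hL
  linarith [hH.1, hL.1]

theorem tendsto_of_tendsto_wdist (hB1 : 0 < bH + cH) (hB2 : 0 < bL + cL)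
    {pstar : ℝ × ℝ} {p : ℕ → ℝ × ℝ}
    (h : Tendsto (fun t => wdist bH bL cH cL pstar (p t)) atTop (nhds 0)) :
    Tendsto p atTop (nhds pstar) := by
  refine tendsto_iff_dist_tendsto_zero.2 (squeeze_zero (fun t => dist_nonneg) (fun t => ?_)
    (by simpa using h.const_mul (bH + cH + (bL + cL))))
  have e1 : |(p t).1 - pstar.1| = (bH + cH) * (|pstar.1 - (p t).1| / (bH + cH)) := by
    rw [abs_sub_comm, mul_div_cancel₀ _ hB1.ne']
  have e2 : |(p t).2 - pstar.2| = (bL + cL) * (|pstar.2 - (p t).2| / (bL + cL)) := by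
    rw [abs_sub_comm, mul_div_cancel₀ _ hB2.ne']
  have h1 : 0 ≤ |pstar.1 - (p t).1| / (bH + cH) := by positivity
  have h2 : 0 ≤ |pstar.2 - (p t).2| / (bL + cL) := by positivity
  rw [Prod.dist_eq, Real.dist_eq, Real.dist_eq, e1, e2, wdist]
  exact max_le (by nlinarith) (by nlinarith)

end Model

namespace OPGA

variable {aH aL bH bL cH cL lo hi alpha : ℝ} {eta : ℕ → ℝ} {pp rr : ℕ → ℝ × ℝ}

theorem price_mem (hdyn : OPGA aH aL bH bL cH cL lo hi alpha eta pp rr) (hlohi : lo ≤ hi)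
    (hp0 : InP2 lo hi (pp 0)) : ∀ t, InP2 lo hi (pp t)
  | 0 => hp0
  | t + 1 => ⟨hdyn.1 t ▸ proj_mem_Icc hlohi _, hdyn.2.1 t ▸ proj_mem_Icc hlohi _⟩

theorem ref_succ (hdyn : OPGA aH aL bH bL cH cL lo hi alpha eta pp rr) (t : ℕ) :
    rr (t + 1) = alpha • rr t + (1 - alpha) • pp t :=
  Prod.ext (hdyn.2.2.1 t) (hdyn.2.2.2 t)

theorem ref_mem (hdyn : OPGA aH aL bH bL cH cL lo hi alpha eta pp rr) (halpha0 : 0 ≤ alpha)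
    (halpha1 : alpha ≤ 1) (hp : ∀ t, InP2 lo hi (pp t)) (hr0 : InP2 lo hi (rr 0)) :
    ∀ t, InP2 lo hi (rr t)
  | 0 => hr0
  | t + 1 => by
    rw [hdyn.ref_succ t]
    exact (convex_Icc lo hi).prod (convex_Icc lo hi) (ref_mem hdyn halpha0 halpha1 hp hr0 t)
      (hp t) halpha0 (sub_nonneg.2 halpha1) (by ring)

theorem tendsto_dist_price_succ (hdyn : OPGA aH aL bH bL cH cL lo hi alpha eta pp rr)
    (hp : ∀ t, InP2 lo hi (pp t)) (hB1 : 0 ≤ bH + cH) (hB2 : 0 ≤ bL + cL)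
    (hnn : ∀ t, 0 ≤ eta t) (hto0 : Tendsto eta atTop (nhds 0)) {M : ℝ}
    (hMH : ∀ t, |GrH aH aL bH bL cH cL (pp t) (rr t)| ≤ M)
    (hML : ∀ t, |GrL aH aL bH bL cH cL (pp t) (rr t)| ≤ M) :
    Tendsto (fun t => dist (pp (t + 1)) (pp t)) atTop (nhds 0) := by
  have hstep (B G : ℝ) (hB : 0 ≤ B) (hG : |G| ≤ M) (t : ℕ) :
      |eta t * B * G| ≤ eta t * B * M := by
    rw [abs_mul, abs_of_nonneg (mul_nonneg (hnn t) hB)]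
    exact mul_le_mul_of_nonneg_left hG (mul_nonneg (hnn t) hB)
  refine squeeze_zero (fun t => dist_nonneg) (fun t => ?_) (by
    simpa using ((hto0.mul_const (bH + cH)).mul_const M).add
      ((hto0.mul_const (bL + cL)).mul_const M))
  rw [Prod.dist_eq, Real.dist_eq, Real.dist_eq, hdyn.1 t, hdyn.2.1 t]
  exact (max_le_add_of_nonneg (abs_nonneg _) (abs_nonneg _)).trans (add_le_add
    ((abs_proj_add_sub_le (hp t).1 _).trans (hstep _ _ hB1 (hMH t) t))
    ((abs_proj_add_sub_le (hp t).2 _).trans (hstep _ _ hB2 (hML t) t)))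

theorem tendsto_dist_ref_price (hdyn : OPGA aH aL bH bL cH cL lo hi alpha eta pp rr)
    (halpha0 : 0 ≤ alpha) (halpha1 : alpha < 1)
    (hΔp : Tendsto (fun t => dist (pp (t + 1)) (pp t)) atTop (nhds 0)) :
    Tendsto (fun t => dist (rr t) (pp t)) atTop (nhds 0) := by
  have hrec (t : ℕ) : dist (rr (t + 1)) (pp (t + 1))
      ≤ (1 - (1 - alpha) * 1) * dist (rr t) (pp t) + 1 * dist (pp (t + 1)) (pp t) := by
    have e : dist (rr (t + 1)) (pp t) = alpha * dist (rr t) (pp t) := by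
      rw [hdyn.ref_succ t, dist_eq_norm, dist_eq_norm,
        show alpha • rr t + (1 - alpha) • pp t - pp t = alpha • (rr t - pp t) by module,
        norm_smul, Real.norm_of_nonneg halpha0]
    calc dist (rr (t + 1)) (pp (t + 1)) ≤ dist (rr (t + 1)) (pp t) + dist (pp t) (pp (t + 1)) :=
          dist_triangle _ _ _
      _ = _ := by rw [e, dist_comm (pp t)]; ring
  refine tendsto_zero_of_le_one_sub_mul_add (sub_pos.2 halpha1) (fun t => dist_nonneg)
    (fun _ => zero_le_one) (Eventually.of_forall fun _ => by linarith) ?_ hΔp hrec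
  simpa using tendsto_natCast_atTop_atTop

theorem tendsto_wdist (hdyn : OPGA aH aL bH bL cH cL lo hi alpha eta pp rr)
    (hbH : 0 < bH) (hbL : 0 < bL) (hB1 : 0 < bH + cH) (hB2 : 0 < bL + cL) (hlo : 0 < lo)
    (hnn : ∀ t, 0 ≤ eta t) (hanti : Antitone eta) (hto0 : Tendsto eta atTop (nhds 0))
    (hdiv : Tendsto (fun n => ∑ t ∈ range n, eta t) atTop atTop)
    {pstar : ℝ × ℝ} (hsne : IsSNE aH aL bH bL cH cL pstar) (hstar : InP2 lo hi pstar)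
    (hp : ∀ t, InP2 lo hi (pp t)) {M : ℝ}
    (hMH : ∀ t, |GrH aH aL bH bL cH cL (pp t) (rr t)| ≤ M)
    (hML : ∀ t, |GrL aH aL bH bL cH cL (pp t) (rr t)| ≤ M)
    (hΔH : Tendsto (fun t => dist (GrH aH aL bH bL cH cL (pp (t + 1)) (rr (t + 1)))
      (GrH aH aL bH bL cH cL (pp t) (rr t))) atTop (nhds 0))
    (hΔL : Tendsto (fun t => dist (GrL aH aL bH bL cH cL (pp (t + 1)) (rr (t + 1)))
      (GrL aH aL bH bL cH cL (pp t) (rr t))) atTop (nhds 0))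
    (hrefH : Tendsto (fun t => dist (GrH aH aL bH bL cH cL (pp t) (rr t))
      (GrH aH aL bH bL cH cL (pp t) (pp t))) atTop (nhds 0))
    (hrefL : Tendsto (fun t => dist (GrL aH aL bH bL cH cL (pp t) (rr t))
      (GrL aH aL bH bL cH cL (pp t) (pp t))) atTop (nhds 0)) :
    Tendsto (fun t => wdist bH bL cH cL pstar (pp t)) atTop (nhds 0) := by
  have hhi : 0 < hi := (hlo.trans_le hstar.1.1).trans_le hstar.1.2
  have h := tendsto_sum_abs_sub_div_of_proj_ascent (ι := Fin 2) (lo := lo) (hi := hi)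
    (κ := (hi ^ 2)⁻¹) (w := ![bH + cH, bL + cL]) (q := ![pstar.1, pstar.2])
    (z := fun t => ![(pp t).1, (pp t).2])
    (u := fun t => ![GrH aH aL bH bL cH cL (pp t) (rr t), GrL aH aL bH bL cH cL (pp t) (rr t)])
    (by positivity) (Fin.forall_fin_two.2 ⟨hB1, hB2⟩)
    (Fin.forall_fin_two.2 ⟨hstar.1, hstar.2⟩)
    hnn hanti hto0 hdiv (fun t => Fin.forall_fin_two.2 ⟨hdyn.1 t, hdyn.2.1 t⟩)
    (fun t => Fin.forall_fin_two.2 ⟨hMH t, hML t⟩) (Fin.forall_fin_two.2 ⟨hΔH, hΔL⟩)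
    (by simpa using hrefH.add hrefL) fun t => by
      simpa only [Fin.sum_univ_two, Matrix.cons_val_zero, Matrix.cons_val_one, wdist,
        ← div_eq_inv_mul] using wdist_div_sq_sub_le hbH hbL hB1 hB2 hlo hsne hstar (hp t) (rr t)
  simpa only [Fin.sum_univ_two, Matrix.cons_val_zero, Matrix.cons_val_one, wdist] using h

theorem tendsto_wdist_of_continuousOn (hdyn : OPGA aH aL bH bL cH cL lo hi alpha eta pp rr)
    (hbH : 0 < bH) (hbL : 0 < bL) (hB1 : 0 < bH + cH) (hB2 : 0 < bL + cL) (hlo : 0 < lo)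
    (hnn : ∀ t, 0 ≤ eta t) (hanti : Antitone eta) (hto0 : Tendsto eta atTop (nhds 0))
    (hdiv : Tendsto (fun n => ∑ t ∈ range n, eta t) atTop atTop)
    {pstar : ℝ × ℝ} (hsne : IsSNE aH aL bH bL cH cL pstar) (hstar : InP2 lo hi pstar)
    (hp : ∀ t, InP2 lo hi (pp t)) {K : Set ((ℝ × ℝ) × (ℝ × ℝ))} (hK : IsCompact K)
    (hpr : ∀ t, (pp t, rr t) ∈ K) (hpp : ∀ t, (pp t, pp t) ∈ K)
    (hGH : ContinuousOn (fun x => GrH aH aL bH bL cH cL x.1 x.2) K)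
    (hGL : ContinuousOn (fun x => GrL aH aL bH bL cH cL x.1 x.2) K) {M : ℝ}
    (hMH : ∀ t, |GrH aH aL bH bL cH cL (pp t) (rr t)| ≤ M)
    (hML : ∀ t, |GrL aH aL bH bL cH cL (pp t) (rr t)| ≤ M)
    (hΔp : Tendsto (fun t => dist (pp (t + 1)) (pp t)) atTop (nhds 0))
    (hgap : Tendsto (fun t => dist (rr t) (pp t)) atTop (nhds 0)) :
    Tendsto (fun t => wdist bH bL cH cL pstar (pp t)) atTop (nhds 0) := by
  have hΔr : Tendsto (fun t => dist (rr (t + 1)) (rr t)) atTop (nhds 0) :=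
    squeeze_zero (fun _ => dist_nonneg) (fun t => dist_triangle4 _ (pp (t + 1)) (pp t) _)
      (by simpa [dist_comm] using ((hgap.comp (tendsto_add_atTop_nat 1)).add hΔp).add hgap)
  have hΔx : Tendsto (fun t => dist (pp (t + 1), rr (t + 1)) (pp t, rr t)) atTop (nhds 0) := by
    simpa [Prod.dist_eq] using hΔp.max hΔr
  have hδx : Tendsto (fun t => dist (pp t, rr t) (pp t, pp t)) atTop (nhds 0) := by
    simpa [Prod.dist_eq] using hgap
  have hUH := hK.uniformContinuousOn_of_continuous hGH
  have hUL := hK.uniformContinuousOn_of_continuous hGL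
  have hΔH := hUH.tendsto_dist_comp (fun t => hpr (t + 1)) hpr hΔx
  have hΔL := hUL.tendsto_dist_comp (fun t => hpr (t + 1)) hpr hΔx
  have hrefH := hUH.tendsto_dist_comp hpr hpp hδx
  have hrefL := hUL.tendsto_dist_comp hpr hpp hδx
  dsimp only at hΔH hΔL hrefH hrefL
  exact hdyn.tendsto_wdist hbH hbL hB1 hB2 hlo hnn hanti hto0 hdiv hsne hstar hp hMH hML
    hΔH hΔL hrefH hrefL

end OPGA

theorem OPGA_global_convergence_general (aH aL bH bL cH cL : ℝ)
    (hbH : 0 < bH) (hbL : 0 < bL) (hcH : 0 < cH) (hcL : 0 < cL)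
    (lo hi : ℝ) (hlo : 0 < lo) (hlohi : lo ≤ hi) (alpha : ℝ) (halpha0 : 0 ≤ alpha) (halpha1 : alpha < 1)
    (eta : ℕ → ℝ) (hnn : ∀ t, 0 ≤ eta t) (hanti : Antitone eta)
    (hto0 : Tendsto eta atTop (nhds 0))
    (hdiv : Tendsto (fun n => ∑ t ∈ Finset.range n, eta t) atTop atTop)
    (pstar : ℝ × ℝ) (hsne : IsSNE aH aL bH bL cH cL pstar)
    (hstar : InP2 lo hi pstar)
    (pp rr : ℕ → ℝ × ℝ) (hp0 : InP2 lo hi (pp 0)) (hr0 : InP2 lo hi (rr 0))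
    (hdyn : OPGA aH aL bH bL cH cL lo hi alpha eta pp rr) :
    Tendsto pp atTop (nhds pstar) ∧ Tendsto rr atTop (nhds pstar) := by
  have hB1 : 0 < bH + cH := add_pos hbH hcH
  have hB2 : 0 < bL + cL := add_pos hbL hcL
  have hp := hdyn.price_mem hlohi hp0
  have hr := hdyn.ref_mem halpha0 halpha1.le hp hr0
  set K : Set ((ℝ × ℝ) × (ℝ × ℝ)) :=
    (Icc lo hi ×ˢ Icc lo hi) ×ˢ (Icc lo hi ×ˢ Icc lo hi)
  have hK : IsCompact K :=
    (isCompact_Icc.prod isCompact_Icc).prod (isCompact_Icc.prod isCompact_Icc)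
  have hpr (t : ℕ) : (pp t, rr t) ∈ K := ⟨hp t, hr t⟩
  have hGH := (continuousOn_GrH (aH := aH) (aL := aL) (bL := bL) (cL := cL) hB1.ne').mono
    fun x (hx : x ∈ K) => (hlo.trans_le hx.1.1.1).ne'
  have hGL := (continuousOn_GrL (aH := aH) (aL := aL) (bH := bH) (cH := cH) hB2.ne').mono
    fun x (hx : x ∈ K) => (hlo.trans_le hx.1.2.1).ne'
  obtain ⟨M, hM⟩ := hK.exists_bound_of_continuousOn (hGH.prodMk hGL)
  have hMH (t : ℕ) : |GrH aH aL bH bL cH cL (pp t) (rr t)| ≤ M :=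
    (norm_fst_le _).trans (hM _ (hpr t))
  have hML (t : ℕ) : |GrL aH aL bH bL cH cL (pp t) (rr t)| ≤ M :=
    (norm_snd_le _).trans (hM _ (hpr t))
  have hΔp := hdyn.tendsto_dist_price_succ hp hB1.le hB2.le hnn hto0 hMH hML
  have hgap := hdyn.tendsto_dist_ref_price halpha0 halpha1 hΔp
  have hlim := tendsto_of_tendsto_wdist hB1 hB2 <|
    hdyn.tendsto_wdist_of_continuousOn hbH hbL hB1 hB2 hlo hnn hanti hto0 hdiv hsne hstar hp hK
      hpr (fun t => ⟨hp t, hp t⟩) hGH hGL hMH hML hΔp hgap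
  exact ⟨hlim, hlim.congr_dist (by simpa [dist_comm] using hgap)⟩

theorem OPGA_global_convergence (aH aL bH bL cH cL : ℝ)
    (hbH : 0 < bH) (hbL : 0 < bL) (hcH : 0 < cH) (hcL : 0 < cL)
    (lo hi : ℝ) (hlo : 0 < lo) (hlohi : lo ≤ hi) (alpha : ℝ) (halpha0 : 0 ≤ alpha) (halpha1 : alpha < 1)
    (eta : ℕ → ℝ) (hnn : ∀ t, 0 ≤ eta t) (hanti : Antitone eta)
    (hto0 : Tendsto eta atTop (nhds 0))
    (hdiv : Tendsto (fun n => ∑ t ∈ Finset.range n, eta t) atTop atTop)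
    (pstar : ℝ × ℝ) (hsne : IsSNE aH aL bH bL cH cL pstar)
    (huniq : ∀ q : ℝ × ℝ, IsSNE aH aL bH bL cH cL q → q = pstar)
    (hstar : InP2 lo hi pstar)
    (pp rr : ℕ → ℝ × ℝ) (hp0 : InP2 lo hi (pp 0)) (hr0 : InP2 lo hi (rr 0))
    (hdyn : OPGA aH aL bH bL cH cL lo hi alpha eta pp rr) :
    Tendsto pp atTop (nhds pstar) ∧ Tendsto rr atTop (nhds pstar) :=
  OPGA_global_convergence_general aH aL bH bL cH cL hbH hbL hcH hcL lo hi hlo hlohi alpha halpha0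
    halpha1 eta hnn hanti hto0 hdiv pstar hsne hstar pp rr hp0 hr0 hdyn
end

section
/- If the step-sizes (η^t) form a nonincreasing sequence of nonnegative reals with η^t → 0, then the difference r^t − p^t between the reference-price path and the price path generated by the OPGA dynamics converges to (0, 0) as t → ∞. -/
open Real Filter

lemma proj_lip' (lo hi x y : ℝ) :
    |min (max y lo) hi - min (max x lo) hi| ≤ |y - x| := by
  have h1 := abs_min_sub_min_le_max (max y lo) hi (max x lo) hi
  have h2 := abs_max_sub_max_le_abs y x lo
  simp at h1
  exact h1.trans h2

lemma key_rec (α M : ℝ) (h0 : 0 ≤ α) (h1 : α < 1) (e u : ℕ → ℝ)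
    (hen : ∀ t, 0 ≤ e t) (heM : ∀ t, e t ≤ M)
    (hrec : ∀ t, e (t+1) ≤ α * e t + u t)
    (hu : Tendsto u atTop (nhds 0)) :
    Tendsto e atTop (nhds 0) := by
  have hM : 0 ≤ M := (hen 0).trans (heM 0)
  rw [Metric.tendsto_atTop]
  intro ε hε
  have hε2 : 0 < (1 - α) * (ε/2) := mul_pos (by linarith) (by linarith)
  obtain ⟨N, hN⟩ := (Metric.tendsto_atTop.1 hu) ((1-α)*(ε/2)) hε2
  have hub : ∀ t ≥ N, u t ≤ (1-α)*(ε/2) := by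
    intro t ht
    have := hN t ht
    rw [Real.dist_eq, sub_zero] at this
    exact (le_abs_self _).trans this.le
  have hkey : ∀ k, e (N + k) ≤ α ^ k * M + ε/2 := by
    intro k
    induction k with
    | zero => simpa using le_trans (heM N) (by linarith)
    | succ k ih =>
      have hu' := hub (N + k) (Nat.le_add_right _ _)
      have hα : α * e (N + k) ≤ α * (α ^ k * M + ε/2) :=
        mul_le_mul_of_nonneg_left ih h0
      calc e (N + (k+1)) = e ((N + k) + 1) := by ring_nf
        _ ≤ α * e (N+k) + u (N+k) := hrec _
        _ ≤ α * (α ^ k * M + ε/2) + (1-α)*(ε/2) := add_le_add hα hu'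
        _ = α ^ (k+1) * M + ε/2 := by ring
  obtain ⟨K, hK⟩ := (Metric.tendsto_atTop.1
    ((tendsto_pow_atTop_nhds_zero_of_lt_one h0 h1).mul_const M)) (ε/2) (by positivity)
  refine ⟨N + K, fun n hn => ?_⟩
  rw [Real.dist_eq, sub_zero, abs_of_nonneg (hen n)]
  have h3 : e n ≤ α ^ (n - N) * M + ε/2 := by
    have := hkey (n - N)
    rwa [Nat.add_sub_cancel' (le_trans (Nat.le_add_right _ _) hn)] at this
  have h4 : α ^ (n - N) * M < ε/2 := by
    have := hK (n - N) (by omega)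
    rw [Real.dist_eq, zero_mul, sub_zero] at this
    exact (le_abs_self _).trans_lt this
  linarith

lemma GrH_bound (aH aL bH bL cH cL lo : ℝ) (hbc : 0 < bH + cH) (hlo : 0 < lo)
    (p r : ℝ × ℝ) (hp : lo ≤ p.1) :
    |GrH aH aL bH bL cH cL p r| ≤ 1/((bH+cH)*lo) + 1 := by
  simp only [GrH, demH]
  set E1 := Real.exp (util aH bH cH p.1 r.1) with hE1def
  set E2 := Real.exp (util aL bL cL p.2 r.2) with hE2def
  have hE1 : 0 < E1 := Real.exp_pos _
  have hE2 : 0 < E2 := Real.exp_pos _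
  have hden : 0 < 1 + E1 + E2 := by linarith
  have hd0 : 0 < E1/(1+E1+E2) := by positivity
  have hd1 : E1/(1+E1+E2) < 1 := (div_lt_one hden).2 (by linarith)
  have hp0 : 0 < p.1 := lt_of_lt_of_le hlo hp
  have hA0 : 0 < 1/((bH+cH)*p.1) := by positivity
  have hA : 1/((bH+cH)*p.1) ≤ 1/((bH+cH)*lo) :=
    one_div_le_one_div_of_le (by positivity) (mul_le_mul_of_nonneg_left hp hbc.le)
  rw [abs_le]
  constructor <;> [linarith; linarith]

lemma GrL_bound (aH aL bH bL cH cL lo : ℝ) (hbc : 0 < bL + cL) (hlo : 0 < lo)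
    (p r : ℝ × ℝ) (hp : lo ≤ p.2) :
    |GrL aH aL bH bL cH cL p r| ≤ 1/((bL+cL)*lo) + 1 := by
  simp only [GrL, demL]
  set E1 := Real.exp (util aH bH cH p.1 r.1) with hE1def
  set E2 := Real.exp (util aL bL cL p.2 r.2) with hE2def
  have hE1 : 0 < E1 := Real.exp_pos _
  have hE2 : 0 < E2 := Real.exp_pos _
  have hden : 0 < 1 + E1 + E2 := by linarith
  have hd0 : 0 < E2/(1+E1+E2) := by positivity
  have hd1 : E2/(1+E1+E2) < 1 := (div_lt_one hden).2 (by linarith)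
  have hp0 : 0 < p.2 := lt_of_lt_of_le hlo hp
  have hA0 : 0 < 1/((bL+cL)*p.2) := by positivity
  have hA : 1/((bL+cL)*p.2) ≤ 1/((bL+cL)*lo) :=
    one_div_le_one_div_of_le (by positivity) (mul_le_mul_of_nonneg_left hp hbc.le)
  rw [abs_le]
  constructor <;> [linarith; linarith]


theorem OPGA_ref_price_gap_vanishes (aH aL bH bL cH cL : ℝ)
    (hbH : 0 < bH) (hbL : 0 < bL) (hcH : 0 < cH) (hcL : 0 < cL)
    (lo hi : ℝ) (hlo : 0 < lo) (hlohi : lo ≤ hi) (alpha : ℝ) (halpha0 : 0 ≤ alpha) (halpha1 : alpha < 1)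
    (eta : ℕ → ℝ) (hnn : ∀ t, 0 ≤ eta t) (hanti : Antitone eta)
    (hto0 : Tendsto eta atTop (nhds 0))
    (pp rr : ℕ → ℝ × ℝ) (hp0 : InP2 lo hi (pp 0)) (hr0 : InP2 lo hi (rr 0))
    (hdyn : OPGA aH aL bH bL cH cL lo hi alpha eta pp rr) :
    Tendsto (fun t => rr t - pp t) atTop (nhds ((0 : ℝ), (0 : ℝ))) := by
  obtain ⟨hP1, hP2, hR1, hR2⟩ := hdyn
  have hbcH : 0 < bH + cH := by linarith
  have hbcL : 0 < bL + cL := by linarith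
  have hproj_mem : ∀ x, proj lo hi x ∈ Set.Icc lo hi := fun x =>
    ⟨le_min (le_max_right _ _) hlohi, min_le_right _ _⟩
  have hpmem : ∀ t, InP2 lo hi (pp t) := by
    intro t
    induction t with
    | zero => exact hp0
    | succ t ih =>
      refine ⟨?_, ?_⟩
      · rw [hP1 t]; exact hproj_mem _
      · rw [hP2 t]; exact hproj_mem _
  have hrmem : ∀ t, InP2 lo hi (rr t) := by
    intro t
    induction t with
    | zero => exact hr0
    | succ t ih =>
      obtain ⟨⟨h1, h2⟩, h3, h4⟩ := ih
      obtain ⟨⟨g1, g2⟩, g3, g4⟩ := hpmem t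
      refine ⟨⟨?_, ?_⟩, ?_, ?_⟩
      · rw [hR1 t]; nlinarith
      · rw [hR1 t]; nlinarith
      · rw [hR2 t]; nlinarith
      · rw [hR2 t]; nlinarith
  set BH : ℝ := 1/((bH+cH)*lo) + 1 with hBHdef
  set BL : ℝ := 1/((bL+cL)*lo) + 1 with hBLdef
  have hBH0 : 0 ≤ BH := by positivity
  have hBL0 : 0 ≤ BL := by positivity
  -- step bounds
  have hstepH : ∀ t, |(pp (t+1)).1 - (pp t).1| ≤ eta t * ((bH+cH) * BH) := by
    intro t
    have hx : min (max ((pp t).1) lo) hi = (pp t).1 := by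
      rw [max_eq_left (hpmem t).1.1, min_eq_left (hpmem t).1.2]
    have h1 : |(pp (t+1)).1 - (pp t).1| ≤
        |eta t * (bH + cH) * GrH aH aL bH bL cH cL (pp t) (rr t)| := by
      rw [hP1 t]
      calc |proj lo hi ((pp t).1 + eta t * (bH + cH) * GrH aH aL bH bL cH cL (pp t) (rr t))
            - (pp t).1|
          = |min (max ((pp t).1 + eta t * (bH + cH) * GrH aH aL bH bL cH cL (pp t) (rr t)) lo) hi
            - min (max ((pp t).1) lo) hi| := by rw [hx]; rfl
        _ ≤ |(pp t).1 + eta t * (bH + cH) * GrH aH aL bH bL cH cL (pp t) (rr t) - (pp t).1| :=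
            proj_lip' lo hi _ _
        _ = |eta t * (bH + cH) * GrH aH aL bH bL cH cL (pp t) (rr t)| := by ring_nf
    refine h1.trans ?_
    rw [abs_mul, abs_of_nonneg (mul_nonneg (hnn t) hbcH.le), mul_assoc]
    exact mul_le_mul_of_nonneg_left
      (mul_le_mul_of_nonneg_left
        (GrH_bound aH aL bH bL cH cL lo hbcH hlo _ _ (hpmem t).1.1) hbcH.le) (hnn t)
  have hstepL : ∀ t, |(pp (t+1)).2 - (pp t).2| ≤ eta t * ((bL+cL) * BL) := by
    intro t
    have hx : min (max ((pp t).2) lo) hi = (pp t).2 := by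
      rw [max_eq_left (hpmem t).2.1, min_eq_left (hpmem t).2.2]
    have h1 : |(pp (t+1)).2 - (pp t).2| ≤
        |eta t * (bL + cL) * GrL aH aL bH bL cH cL (pp t) (rr t)| := by
      rw [hP2 t]
      calc |proj lo hi ((pp t).2 + eta t * (bL + cL) * GrL aH aL bH bL cH cL (pp t) (rr t))
            - (pp t).2|
          = |min (max ((pp t).2 + eta t * (bL + cL) * GrL aH aL bH bL cH cL (pp t) (rr t)) lo) hi
            - min (max ((pp t).2) lo) hi| := by rw [hx]; rfl
        _ ≤ |(pp t).2 + eta t * (bL + cL) * GrL aH aL bH bL cH cL (pp t) (rr t) - (pp t).2| :=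
            proj_lip' lo hi _ _
        _ = |eta t * (bL + cL) * GrL aH aL bH bL cH cL (pp t) (rr t)| := by ring_nf
    refine h1.trans ?_
    rw [abs_mul, abs_of_nonneg (mul_nonneg (hnn t) hbcL.le), mul_assoc]
    exact mul_le_mul_of_nonneg_left
      (mul_le_mul_of_nonneg_left
        (GrL_bound aH aL bH bL cH cL lo hbcL hlo _ _ (hpmem t).2.1) hbcL.le) (hnn t)
  -- recurrences
  have hrecH : ∀ t, |(rr (t+1)).1 - (pp (t+1)).1| ≤
      alpha * |(rr t).1 - (pp t).1| + eta t * ((bH+cH) * BH) := by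
    intro t
    have heq : (rr (t+1)).1 - (pp (t+1)).1 =
        alpha * ((rr t).1 - (pp t).1) + ((pp t).1 - (pp (t+1)).1) := by
      rw [hR1 t]; ring
    calc |(rr (t+1)).1 - (pp (t+1)).1|
        ≤ |alpha * ((rr t).1 - (pp t).1)| + |(pp t).1 - (pp (t+1)).1| := by
          rw [heq]; exact abs_add_le _ _
      _ = alpha * |(rr t).1 - (pp t).1| + |(pp (t+1)).1 - (pp t).1| := by
          rw [abs_mul, abs_of_nonneg halpha0, abs_sub_comm ((pp t).1) ((pp (t+1)).1)]
      _ ≤ alpha * |(rr t).1 - (pp t).1| + eta t * ((bH+cH) * BH) := by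
          linarith [hstepH t]
  have hrecL : ∀ t, |(rr (t+1)).2 - (pp (t+1)).2| ≤
      alpha * |(rr t).2 - (pp t).2| + eta t * ((bL+cL) * BL) := by
    intro t
    have heq : (rr (t+1)).2 - (pp (t+1)).2 =
        alpha * ((rr t).2 - (pp t).2) + ((pp t).2 - (pp (t+1)).2) := by
      rw [hR2 t]; ring
    calc |(rr (t+1)).2 - (pp (t+1)).2|
        ≤ |alpha * ((rr t).2 - (pp t).2)| + |(pp t).2 - (pp (t+1)).2| := by
          rw [heq]; exact abs_add_le _ _
      _ = alpha * |(rr t).2 - (pp t).2| + |(pp (t+1)).2 - (pp t).2| := by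
          rw [abs_mul, abs_of_nonneg halpha0, abs_sub_comm ((pp t).2) ((pp (t+1)).2)]
      _ ≤ alpha * |(rr t).2 - (pp t).2| + eta t * ((bL+cL) * BL) := by
          linarith [hstepL t]
  -- global bounds
  have hMH : ∀ t, |(rr t).1 - (pp t).1| ≤ hi - lo := fun t =>
    abs_le.2 ⟨by linarith [(hrmem t).1.1, (hpmem t).1.2],
              by linarith [(hrmem t).1.2, (hpmem t).1.1]⟩
  have hML : ∀ t, |(rr t).2 - (pp t).2| ≤ hi - lo := fun t =>
    abs_le.2 ⟨by linarith [(hrmem t).2.1, (hpmem t).2.2],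
              by linarith [(hrmem t).2.2, (hpmem t).2.1]⟩
  have huH : Tendsto (fun t => eta t * ((bH+cH) * BH)) atTop (nhds 0) := by
    simpa using hto0.mul_const ((bH+cH) * BH)
  have huL : Tendsto (fun t => eta t * ((bL+cL) * BL)) atTop (nhds 0) := by
    simpa using hto0.mul_const ((bL+cL) * BL)
  have hH : Tendsto (fun t => (rr t).1 - (pp t).1) atTop (nhds 0) := by
    rw [tendsto_zero_iff_abs_tendsto_zero]
    exact key_rec alpha (hi - lo) halpha0 halpha1 _ _
      (fun t => abs_nonneg _) hMH hrecH huH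
  have hL : Tendsto (fun t => (rr t).2 - (pp t).2) atTop (nhds 0) := by
    rw [tendsto_zero_iff_abs_tendsto_zero]
    exact key_rec alpha (hi - lo) halpha0 halpha1 _ _
      (fun t => abs_nonneg _) hML hrecL huL
  have heq : (fun t => rr t - pp t) =
      fun t => ((rr t).1 - (pp t).1, (rr t).2 - (pp t).2) := by
    funext t; rfl
  rw [heq]
  exact hH.prodMk_nhds hL
end

section
/- Assume the stationary Nash equilibrium p** lies in P² = [p̲, p̄]². Then for every p ∈ P² with p ≠ p**, the function 𝒢 satisfies 𝒢(p) > 0. -/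
open Real Filter

/-!
At a stationary point the reference effect cancels: `G_i(p, p)` is `1 / ((b_i + c_i) p_i) − 1`
plus the logit share of `i` under the utilities `a_j − b_j p_j`. Writing `A`, `B` for the two
exponentials, `(A + ρ B) / (1 + A + B) = 1 − (1 + (1 − ρ) B) / (1 + A + B)` increases in `A`
whenever `ρ ≤ 1`, so for `|τ| ≤ 1` the combination `σ G_H + τ G_L`, with `σ = sign(p_H** − p_H)`,
strictly decreases as `p_H` moves to `p_H**`; symmetrically in `p_L`. Moving from `p` to `p**`
one coordinate at a time therefore strictly decreases `𝒢`, which vanishes at `p**`.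
-/

lemma Real.abs_sign_le_one (r : ℝ) : |Real.sign r| ≤ 1 := by
  rcases Real.sign_apply_eq r with h | h | h <;> simp [h]

section Stationary

variable (aH aL bH bL cH cL : ℝ)

lemma GrL_eq_GrH_swap (p r : ℝ × ℝ) :
    GrL aH aL bH bL cH cL p r = GrH aL aH bL bH cL cH p.swap r.swap := by
  simp only [GrL, GrH, demL, demH, Prod.fst_swap, Prod.snd_swap, add_right_comm (1 : ℝ)]

lemma GrH_eq_GrL_swap (p r : ℝ × ℝ) :
    GrH aH aL bH bL cH cL p r = GrL aL aH bL bH cL cH p.swap r.swap := by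
  rw [GrL_eq_GrH_swap, Prod.swap_swap, Prod.swap_swap]

variable {aH aL bH bL cH cL}

lemma GrH_add_mul_GrL_strictAntiOn (hbH : 0 < bH) (hcH : 0 ≤ cH) {ρ : ℝ} (hρ : ρ ≤ 1)
    (y : ℝ) :
    StrictAntiOn (fun x => GrH aH aL bH bL cH cL (x, y) (x, y) +
      ρ * GrL aH aL bH bL cH cL (x, y) (x, y)) (Set.Ioi 0) := by
  intro x (hx : 0 < x) x' _ hxx'
  simp only [GrH, GrL, demH, demL, util, sub_self, mul_zero, add_zero]
  set A := exp (aH - bH * x)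
  set A' := exp (aH - bH * x')
  set B := exp (aL - bL * y)
  have hA' : 0 < A' := exp_pos _
  have hB : 0 < B := exp_pos _
  have hAA' : A' < A := exp_lt_exp.2 (by nlinarith)
  have hinv : 1 / ((bH + cH) * x') < 1 / ((bH + cH) * x) :=
    one_div_lt_one_div_of_lt (by positivity) (by nlinarith)
  have hshare : (A' + ρ * B) / (1 + A' + B) ≤ (A + ρ * B) / (1 + A + B) := by
    rw [div_le_div_iff₀ (by positivity) (by positivity)]
    nlinarith [mul_nonneg (sub_nonneg.2 hAA'.le) (by nlinarith : 0 ≤ 1 + (1 - ρ) * B)]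
  have hsplit : ∀ A, A / (1 + A + B) + ρ * (B / (1 + A + B)) = (A + ρ * B) / (1 + A + B) :=
    fun _ => by ring
  linarith [hsplit A, hsplit A']

lemma sign_mul_GrH_add_mul_GrL_lt_of_fst_ne (hbH : 0 < bH) (hcH : 0 ≤ cH) {τ : ℝ}
    (hτ : |τ| ≤ 1) {x x' : ℝ} (hx : 0 < x) (hx' : 0 < x') (hne : x ≠ x') (y : ℝ) :
    sign (x' - x) * GrH aH aL bH bL cH cL (x', y) (x', y) +
        τ * GrL aH aL bH bL cH cL (x', y) (x', y) <
      sign (x' - x) * GrH aH aL bH bL cH cL (x, y) (x, y) +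
        τ * GrL aH aL bH bL cH cL (x, y) (x, y) := by
  obtain ⟨hτlo, hτhi⟩ := abs_le.1 hτ
  rcases hne.lt_or_gt with hlt | hgt
  · rw [Real.sign_of_pos (sub_pos.2 hlt)]
    linarith [GrH_add_mul_GrL_strictAntiOn (aH := aH) (aL := aL) (bL := bL) (cL := cL)
      hbH hcH hτhi y hx hx' hlt]
  · rw [Real.sign_of_neg (sub_neg.2 hgt)]
    linarith [GrH_add_mul_GrL_strictAntiOn (aH := aH) (aL := aL) (bL := bL) (cL := cL)
      hbH hcH (ρ := -τ) (by linarith) y hx' hx hgt]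

lemma sign_mul_GrH_add_mul_GrL_le_of_fst (hbH : 0 < bH) (hcH : 0 ≤ cH) {τ : ℝ}
    (hτ : |τ| ≤ 1) {x x' : ℝ} (hx : 0 < x) (hx' : 0 < x') (y : ℝ) :
    sign (x' - x) * GrH aH aL bH bL cH cL (x', y) (x', y) +
        τ * GrL aH aL bH bL cH cL (x', y) (x', y) ≤
      sign (x' - x) * GrH aH aL bH bL cH cL (x, y) (x, y) +
        τ * GrL aH aL bH bL cH cL (x, y) (x, y) := by
  rcases eq_or_ne x x' with rfl | hne
  · rfl
  · exact (sign_mul_GrH_add_mul_GrL_lt_of_fst_ne hbH hcH hτ hx hx' hne y).le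

lemma mul_GrH_add_sign_mul_GrL_lt_of_snd_ne (hbL : 0 < bL) (hcL : 0 ≤ cL) {σ : ℝ}
    (hσ : |σ| ≤ 1) {y y' : ℝ} (hy : 0 < y) (hy' : 0 < y') (hne : y ≠ y') (x : ℝ) :
    σ * GrH aH aL bH bL cH cL (x, y') (x, y') +
        sign (y' - y) * GrL aH aL bH bL cH cL (x, y') (x, y') <
      σ * GrH aH aL bH bL cH cL (x, y) (x, y) +
        sign (y' - y) * GrL aH aL bH bL cH cL (x, y) (x, y) := by
  have := sign_mul_GrH_add_mul_GrL_lt_of_fst_ne (aH := aL) (aL := aH) (bL := bH) (cL := cH)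
    hbL hcL hσ hy hy' hne x
  simp only [GrH_eq_GrL_swap aH aL, GrL_eq_GrH_swap aH aL, Prod.swap_prod_mk] at this ⊢
  linarith

lemma mul_GrH_add_sign_mul_GrL_le_of_snd (hbL : 0 < bL) (hcL : 0 ≤ cL) {σ : ℝ}
    (hσ : |σ| ≤ 1) {y y' : ℝ} (hy : 0 < y) (hy' : 0 < y') (x : ℝ) :
    σ * GrH aH aL bH bL cH cL (x, y') (x, y') +
        sign (y' - y) * GrL aH aL bH bL cH cL (x, y') (x, y') ≤
      σ * GrH aH aL bH bL cH cL (x, y) (x, y) +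
        sign (y' - y) * GrL aH aL bH bL cH cL (x, y) (x, y) := by
  rcases eq_or_ne y y' with rfl | hne
  · rfl
  · exact (mul_GrH_add_sign_mul_GrL_lt_of_snd_ne hbL hcL hσ hy hy' hne x).le

end Stationary

theorem calG_pos_general (aH aL bH bL cH cL : ℝ)
    (hbH : 0 < bH) (hbL : 0 < bL) (hcH : 0 < cH) (hcL : 0 < cL)
    (lo hi : ℝ) (hlo : 0 < lo)
    (pstar : ℝ × ℝ) (hsne : IsSNE aH aL bH bL cH cL pstar) :
    ∀ p : ℝ × ℝ, InP2 lo hi p → p ≠ pstar → 0 < calG aH aL bH bL cH cL pstar p := by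
  obtain ⟨xs, ys⟩ := pstar
  obtain ⟨hxs, hys, hH, hL⟩ := hsne
  rintro ⟨x, y⟩ ⟨⟨hxlo, -⟩, ⟨hylo, -⟩⟩ hne
  have hx : 0 < x := hlo.trans_le hxlo
  have hy : 0 < y := hlo.trans_le hylo
  have hσ := Real.abs_sign_le_one (xs - x)
  have hτ := Real.abs_sign_le_one (ys - y)
  have hstep_x := sign_mul_GrH_add_mul_GrL_le_of_fst (aH := aH) (aL := aL) (bL := bL) (cL := cL)
    hbH hcH.le hτ hx hxs y
  have hstep_y := mul_GrH_add_sign_mul_GrL_le_of_snd (aH := aH) (aL := aL) (bH := bH) (cH := cH)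
    hbL hcL.le hσ hy hys xs
  simp only [hH, hL, mul_zero, add_zero] at hstep_y
  unfold calG
  rcases not_and_or.1 (mt Prod.ext_iff.2 hne) with hxne | hyne
  · linarith [sign_mul_GrH_add_mul_GrL_lt_of_fst_ne (aH := aH) (aL := aL) (bL := bL) (cL := cL)
      hbH hcH.le hτ hx hxs hxne y]
  · have hlt := mul_GrH_add_sign_mul_GrL_lt_of_snd_ne (aH := aH) (aL := aL) (bH := bH) (cH := cH)
      hbL hcL.le hσ hy hys hyne xs
    simp only [hH, hL, mul_zero, add_zero] at hlt
    linarith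

theorem calG_pos (aH aL bH bL cH cL : ℝ)
    (hbH : 0 < bH) (hbL : 0 < bL) (hcH : 0 < cH) (hcL : 0 < cL)
    (lo hi : ℝ) (hlo : 0 < lo) (hlohi : lo ≤ hi)
    (pstar : ℝ × ℝ) (hsne : IsSNE aH aL bH bL cH cL pstar)
    (hstar : InP2 lo hi pstar) :
    ∀ p : ℝ × ℝ, InP2 lo hi p → p ≠ pstar → 0 < calG aH aL bH bL cH cL pstar p :=
  calG_pos_general aH aL bH bL cH cL hbH hbL hcH hcL lo hi hlo pstar hsne
end

section
/- For every p ∈ P², all r, r' ∈ P², and each i ∈ {H, L}, the map r ↦ G_i(p, r) is Lipschitz with constant l_r = (1/4)·√(c_H² + c_L²); that is, |G_i(p, r) − G_i(p, r')| ≤ l_r·‖r − r'‖₂. -/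
open Real Filter

/-! Each MNL demand is a logistic function of a utility gap:
`e^x / (1 + e^x + e^y) = σ(x - log (1 + e^y))`. Since `σ' = σ(1 - σ) ≤ 1/4` and the softplus
`y ↦ log (1 + e^y)` has derivative `σ(y) ∈ (0, 1)`, the demand moves by at most a quarter of
`|Δu_H| + |Δu_L| = c_H |Δr_H| + c_L |Δr_L|`; the price term of `G_i` does not depend on `r`, and
Cauchy–Schwarz turns the bound into `l_r ‖Δr‖₂`. -/

namespace Real

lemma lipschitzWith_sigmoid : LipschitzWith 4⁻¹ sigmoid := by
  refine lipschitzWith_of_nnnorm_deriv_le differentiable_sigmoid fun x => ?_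
  rw [← NNReal.coe_le_coe, coe_nnnorm, deriv_sigmoid, norm_eq_abs]
  push_cast
  have hpos := sigmoid_pos x
  have hlt := sigmoid_lt_one x
  rw [abs_of_pos (by nlinarith)]
  nlinarith [sq_nonneg (2 * sigmoid x - 1)]

lemma hasDerivAt_log_one_add_exp (y : ℝ) :
    HasDerivAt (fun y => log (1 + exp y)) (sigmoid y) y := by
  convert ((hasDerivAt_exp y).const_add 1).log (by positivity) using 1
  rw [sigmoid_def, exp_neg]
  field_simp
  ring

lemma lipschitzWith_log_one_add_exp : LipschitzWith 1 fun y => log (1 + exp y) := by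
  refine lipschitzWith_of_nnnorm_deriv_le
    (fun y => (hasDerivAt_log_one_add_exp y).differentiableAt) fun y => ?_
  rw [(hasDerivAt_log_one_add_exp y).deriv, ← NNReal.coe_le_coe, coe_nnnorm, norm_eq_abs,
    abs_of_pos (sigmoid_pos y), NNReal.coe_one]
  exact sigmoid_le_one y

end Real

noncomputable def logitShare (x y : ℝ) : ℝ := exp x / (1 + exp x + exp y)

lemma logitShare_eq_sigmoid (x y : ℝ) : logitShare x y = sigmoid (x - log (1 + exp y)) := by
  rw [logitShare, sigmoid_def, exp_neg, exp_sub, exp_log (by positivity)]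
  field_simp
  ring

lemma abs_logitShare_sub_le (x y x' y' : ℝ) :
    |logitShare x y - logitShare x' y'| ≤ (|x - x'| + |y - y'|) / 4 := by
  have hσ := lipschitzWith_sigmoid.dist_le_mul (x - log (1 + exp y)) (x' - log (1 + exp y'))
  have hs := lipschitzWith_log_one_add_exp.dist_le_mul y y'
  simp only [dist_eq, NNReal.coe_inv, NNReal.coe_one, one_mul] at hσ hs
  rw [logitShare_eq_sigmoid, logitShare_eq_sigmoid]
  calc _ ≤ 4⁻¹ * |x - log (1 + exp y) - (x' - log (1 + exp y'))| := hσ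
    _ ≤ 4⁻¹ * (|x - x'| + |log (1 + exp y) - log (1 + exp y')|) := by
        rw [sub_sub_sub_comm]
        gcongr
        exact abs_sub _ _
    _ ≤ _ := by linarith

lemma mul_add_mul_le_sqrt_mul_sqrt (a b c d : ℝ) :
    a * b + c * d ≤ √(a ^ 2 + c ^ 2) * √(b ^ 2 + d ^ 2) := by
  rw [← sqrt_mul (by positivity)]
  exact le_sqrt_of_sq_le (by nlinarith [sq_nonneg (a * d - c * b)])

lemma util_sub_util (a b c pi ri ri' : ℝ) :
    util a b c pi ri - util a b c pi ri' = c * (ri - ri') := by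
  rw [util, util]
  ring

lemma abs_mul_add_abs_mul_div_four_le_lr (cH cL : ℝ) (d : ℝ × ℝ) :
    (|cH * d.1| + |cL * d.2|) / 4 ≤ lr cH cL * √(norm2sq d) := by
  have := mul_add_mul_le_sqrt_mul_sqrt |cH| |d.1| |cL| |d.2|
  rw [sq_abs, sq_abs, sq_abs, sq_abs] at this
  rw [lr, norm2sq, abs_mul, abs_mul]
  linarith

theorem G_lipschitz_in_r_general (aH aL bH bL cH cL : ℝ)
    (p r r' : ℝ × ℝ) :
    |GrH aH aL bH bL cH cL p r - GrH aH aL bH bL cH cL p r'| ≤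
      lr cH cL * Real.sqrt (norm2sq (r - r')) ∧
    |GrL aH aL bH bL cH cL p r - GrL aH aL bH bL cH cL p r'| ≤
      lr cH cL * Real.sqrt (norm2sq (r - r')) := by
  have hbound := abs_mul_add_abs_mul_div_four_le_lr cH cL (r - r')
  rw [Prod.fst_sub, Prod.snd_sub, ← util_sub_util aH bH cH p.1, ← util_sub_util aL bL cL p.2]
    at hbound
  constructor
  · calc _ = |logitShare (util aH bH cH p.1 r.1) (util aL bL cL p.2 r.2)
          - logitShare (util aH bH cH p.1 r'.1) (util aL bL cL p.2 r'.2)| := by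
          rw [GrH, GrH, demH, demH, logitShare, logitShare]
          ring_nf
      _ ≤ _ := (abs_logitShare_sub_le ..).trans hbound
  · calc _ = |logitShare (util aL bL cL p.2 r.2) (util aH bH cH p.1 r.1)
          - logitShare (util aL bL cL p.2 r'.2) (util aH bH cH p.1 r'.1)| := by
          rw [GrL, GrL, demL, demL, logitShare, logitShare]
          ring_nf
      _ ≤ _ := (abs_logitShare_sub_le ..).trans (by linarith)

theorem G_lipschitz_in_r (aH aL bH bL cH cL : ℝ)
    (hbH : 0 < bH) (hbL : 0 < bL) (hcH : 0 < cH) (hcL : 0 < cL)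
    (lo hi : ℝ) (hlo : 0 < lo) (hlohi : lo ≤ hi)
    (p r r' : ℝ × ℝ) (hp : InP2 lo hi p) (hr : InP2 lo hi r) (hr' : InP2 lo hi r') :
    |GrH aH aL bH bL cH cL p r - GrH aH aL bH bL cH cL p r'| ≤
      lr cH cL * Real.sqrt (norm2sq (r - r')) ∧
    |GrL aH aL bH bL cH cL p r - GrL aH aL bH bL cH cL p r'| ≤
      lr cH cL * Real.sqrt (norm2sq (r - r')) :=
  G_lipschitz_in_r_general aH aL bH bL cH cL p r r'
end

section
/- Assume the stationary Nash equilibrium p** lies in P² = [p̲, p̄]². Let p, r ∈ P², let η ≥ 0, and define the updated price p⁺ by p⁺_i = Proj_P(p_i + η·(b_i + c_i)·G_i(p, r)) for i ∈ {H, L}. Then ‖p** − p⁺‖₂² ≤ ‖p** − p‖₂² − η·(2·H(p) − η·C₁ − C₂·‖r − p‖₂), where H(p) = (b_H + c_H)·G_H(p, p)·(p_H** − p_H) + (b_L + c_L)·G_L(p, p)·(p_L** − p_L), C₁ = M_G²·((b_H + c_H)² + (b_L + c_L)²), and C₂ = 2·l_r·(p̄ − p̲)·((b_H + c_H) + (b_L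 + c_L)). -/
open Real Filter

/-- Key MVT lemma: the fraction exp(A+aa t)/(1+exp(A+aa t)+exp(B+bb t)) moves by
at most (|aa|+|bb|)/4 as t goes from 0 to 1. -/
lemma frac_lipschitz (A B aa bb : ℝ) :
    |Real.exp (A + aa) / (1 + Real.exp (A + aa) + Real.exp (B + bb)) -
      Real.exp A / (1 + Real.exp A + Real.exp B)| ≤ (|aa| + |bb|) / 4 := by
  set f : ℝ → ℝ := fun t => Real.exp (A + aa * t) / (1 + Real.exp (A + aa * t) + Real.exp (B + bb * t)) with hf
  set f' : ℝ → ℝ := fun t =>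
    ((Real.exp (A + aa * t) * aa) * (1 + Real.exp (A + aa * t) + Real.exp (B + bb * t)) -
      Real.exp (A + aa * t) * (Real.exp (A + aa * t) * aa + Real.exp (B + bb * t) * bb)) /
      (1 + Real.exp (A + aa * t) + Real.exp (B + bb * t)) ^ 2 with hf'
  have hDpos : ∀ t : ℝ, (0:ℝ) < 1 + Real.exp (A + aa * t) + Real.exp (B + bb * t) := by
    intro t; positivity
  have hderiv : ∀ t : ℝ, HasDerivAt f (f' t) t := by
    intro t
    have h1 : HasDerivAt (fun t : ℝ => Real.exp (A + aa * t)) (Real.exp (A + aa * t) * aa) t := by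
      have : HasDerivAt (fun t : ℝ => A + aa * t) aa t := by
        simpa using ((hasDerivAt_id t).const_mul aa).const_add A
      exact this.exp
    have h2 : HasDerivAt (fun t : ℝ => Real.exp (B + bb * t)) (Real.exp (B + bb * t) * bb) t := by
      have : HasDerivAt (fun t : ℝ => B + bb * t) bb t := by
        simpa using ((hasDerivAt_id t).const_mul bb).const_add B
      exact this.exp
    have hD : HasDerivAt (fun t : ℝ => 1 + Real.exp (A + aa * t) + Real.exp (B + bb * t))
        (Real.exp (A + aa * t) * aa + Real.exp (B + bb * t) * bb) t :=
      (h1.const_add 1).add h2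
    exact h1.div hD (ne_of_gt (hDpos t))
  have hbound : ∀ t : ℝ, |f' t| ≤ (|aa| + |bb|) / 4 := by
    intro t
    set e1 := Real.exp (A + aa * t) with he1
    set e2 := Real.exp (B + bb * t) with he2
    have he1p : 0 < e1 := Real.exp_pos _
    have he2p : 0 < e2 := Real.exp_pos _
    have hD : (0:ℝ) < 1 + e1 + e2 := by linarith
    rw [hf']
    rw [abs_div, abs_of_pos (by positivity : (0:ℝ) < (1 + e1 + e2) ^ 2)]
    rw [div_le_div_iff₀ (by positivity) (by norm_num)]
    have habs : |e1 * aa * (1 + e1 + e2) - e1 * (e1 * aa + e2 * bb)| ≤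
        |aa| * (e1 * (1 + e2)) + |bb| * (e1 * e2) := by
      have : e1 * aa * (1 + e1 + e2) - e1 * (e1 * aa + e2 * bb) =
          aa * (e1 * (1 + e2)) - bb * (e1 * e2) := by ring
      rw [this]
      calc |aa * (e1 * (1 + e2)) - bb * (e1 * e2)| ≤
          |aa * (e1 * (1 + e2))| + |bb * (e1 * e2)| := abs_sub _ _
        _ = |aa| * (e1 * (1 + e2)) + |bb| * (e1 * e2) := by
            rw [abs_mul aa, abs_mul bb,
              abs_of_pos (show (0:ℝ) < e1 * (1 + e2) by positivity),
              abs_of_pos (show (0:ℝ) < e1 * e2 by positivity)]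
    have h14 : e1 * (1 + e2) ≤ (1 + e1 + e2)^2 / 4 := by nlinarith [sq_nonneg (e1 - (1 + e2))]
    have h24 : e1 * e2 ≤ (1 + e1 + e2)^2 / 4 := by nlinarith [sq_nonneg (e1 - e2)]
    calc |e1 * aa * (1 + e1 + e2) - e1 * (e1 * aa + e2 * bb)| * 4 ≤
        (|aa| * (e1 * (1 + e2)) + |bb| * (e1 * e2)) * 4 := by linarith
      _ ≤ (|aa| + |bb|) * (1 + e1 + e2)^2 := by
          nlinarith [abs_nonneg aa, abs_nonneg bb, mul_le_mul_of_nonneg_left h14 (abs_nonneg aa),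
            mul_le_mul_of_nonneg_left h24 (abs_nonneg bb)]
  have key := Convex.norm_image_sub_le_of_norm_hasDerivWithin_le
    (f := f) (f' := f') (s := Set.Icc (0:ℝ) 1) (C := (|aa| + |bb|) / 4)
    (fun x _ => (hderiv x).hasDerivWithinAt)
    (fun x _ => by simpa [Real.norm_eq_abs] using hbound x)
    (convex_Icc 0 1) (Set.left_mem_Icc.mpr zero_le_one) (Set.right_mem_Icc.mpr zero_le_one)
  simpa [hf, Real.norm_eq_abs] using key

lemma demH_diff (aH aL bH bL cH cL : ℝ) (hcH : 0 ≤ cH) (hcL : 0 ≤ cL) (p r : ℝ × ℝ) :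
    |demH aH aL bH bL cH cL p r - demH aH aL bH bL cH cL p p| ≤
      (cH * |r.1 - p.1| + cL * |r.2 - p.2|) / 4 := by
  unfold demH util
  have h := frac_lipschitz (aH - bH * p.1) (aL - bL * p.2) (cH * (r.1 - p.1)) (cL * (r.2 - p.2))
  rw [abs_mul, abs_mul, abs_of_nonneg hcH, abs_of_nonneg hcL] at h
  have e1 : aH - bH * p.1 + cH * (r.1 - p.1) = (aH - bH * p.1) + cH * (r.1 - p.1) := by ring
  have e0 : aH - bH * p.1 + cH * (p.1 - p.1) = aH - bH * p.1 := by ring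
  have e1' : aL - bL * p.2 + cL * (r.2 - p.2) = (aL - bL * p.2) + cL * (r.2 - p.2) := by ring
  have e0' : aL - bL * p.2 + cL * (p.2 - p.2) = aL - bL * p.2 := by ring
  rw [e1, e0, e1', e0']
  exact h

lemma demL_diff (aH aL bH bL cH cL : ℝ) (hcH : 0 ≤ cH) (hcL : 0 ≤ cL) (p r : ℝ × ℝ) :
    |demL aH aL bH bL cH cL p r - demL aH aL bH bL cH cL p p| ≤
      (cH * |r.1 - p.1| + cL * |r.2 - p.2|) / 4 := by
  unfold demL util
  have h := frac_lipschitz (aL - bL * p.2) (aH - bH * p.1) (cL * (r.2 - p.2)) (cH * (r.1 - p.1))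
  rw [abs_mul, abs_mul, abs_of_nonneg hcH, abs_of_nonneg hcL] at h
  have e1 : aH - bH * p.1 + cH * (r.1 - p.1) = (aH - bH * p.1) + cH * (r.1 - p.1) := by ring
  have e0 : aH - bH * p.1 + cH * (p.1 - p.1) = aH - bH * p.1 := by ring
  have e1' : aL - bL * p.2 + cL * (r.2 - p.2) = (aL - bL * p.2) + cL * (r.2 - p.2) := by ring
  have e0' : aL - bL * p.2 + cL * (p.2 - p.2) = aL - bL * p.2 := by ring
  rw [e1, e0, e1', e0']
  have hd1 : 1 + Real.exp ((aH - bH * p.1) + cH * (r.1 - p.1)) + Real.exp ((aL - bL * p.2) + cL * (r.2 - p.2))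
      = 1 + Real.exp ((aL - bL * p.2) + cL * (r.2 - p.2)) + Real.exp ((aH - bH * p.1) + cH * (r.1 - p.1)) := by ring
  have hd0 : 1 + Real.exp (aH - bH * p.1) + Real.exp (aL - bL * p.2)
      = 1 + Real.exp (aL - bL * p.2) + Real.exp (aH - bH * p.1) := by ring
  rw [hd1, hd0]
  linarith [h]

lemma proj_contract (lo hi x y : ℝ) (hlohi : lo ≤ hi) (hx : x ∈ Set.Icc lo hi) :
    (x - proj lo hi y) ^ 2 ≤ (x - y) ^ 2 := by
  obtain ⟨h1, h2⟩ := hx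
  unfold proj
  rcases le_total y lo with h | h
  · rw [max_eq_right h, min_eq_left hlohi]; nlinarith
  · rw [max_eq_left h]
    rcases le_total y hi with h' | h'
    · rw [min_eq_left h']
    · rw [min_eq_right h']; nlinarith

lemma dem_bounds (aH aL bH bL cH cL : ℝ) (p r : ℝ × ℝ) :
    0 < demH aH aL bH bL cH cL p r ∧ demH aH aL bH bL cH cL p r < 1 ∧
    0 < demL aH aL bH bL cH cL p r ∧ demL aH aL bH bL cH cL p r < 1 := by
  unfold demH demL
  have h1 := Real.exp_pos (util aH bH cH p.1 r.1)
  have h2 := Real.exp_pos (util aL bL cL p.2 r.2)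
  refine ⟨by positivity, ?_, by positivity, ?_⟩
  · rw [div_lt_one (by linarith)]; linarith
  · rw [div_lt_one (by linarith)]; linarith

lemma Gr_abs_le (aH aL bH bL cH cL lo hi : ℝ)
    (hbH : 0 < bH) (hbL : 0 < bL) (hcH : 0 < cH) (hcL : 0 < cL) (hlo : 0 < lo)
    (p r : ℝ × ℝ) (hp : InP2 lo hi p) :
    |GrH aH aL bH bL cH cL p r| ≤ MG bH bL cH cL lo ∧
    |GrL aH aL bH bL cH cL p r| ≤ MG bH bL cH cL lo := by
  obtain ⟨⟨hp1, _⟩, ⟨hp2, _⟩⟩ := hp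
  obtain ⟨hd1, hd2, hd3, hd4⟩ := dem_bounds aH aL bH bL cH cL p r
  have hmaxH : 1 / ((bH + cH) * lo) ≤ max (1 / ((bH + cH) * lo)) (1 / ((bL + cL) * lo)) :=
    le_max_left _ _
  have hmaxL : 1 / ((bL + cL) * lo) ≤ max (1 / ((bH + cH) * lo)) (1 / ((bL + cL) * lo)) :=
    le_max_right _ _
  have hmaxpos : (0:ℝ) < max (1 / ((bH + cH) * lo)) (1 / ((bL + cL) * lo)) :=
    lt_of_lt_of_le (by positivity) hmaxH
  have hP1 : 0 < p.1 := lt_of_lt_of_le hlo hp1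
  have hP2 : 0 < p.2 := lt_of_lt_of_le hlo hp2
  have hinv1 : 1 / ((bH + cH) * p.1) ≤ 1 / ((bH + cH) * lo) :=
    one_div_le_one_div_of_le (by positivity) (by nlinarith)
  have hinv1p : 0 < 1 / ((bH + cH) * p.1) := by positivity
  have hinv2 : 1 / ((bL + cL) * p.2) ≤ 1 / ((bL + cL) * lo) :=
    one_div_le_one_div_of_le (by positivity) (by nlinarith)
  have hinv2p : 0 < 1 / ((bL + cL) * p.2) := by positivity
  unfold GrH GrL MG
  constructor <;> (rw [abs_le]; constructor <;> linarith)

lemma MG_pos (bH bL cH cL lo : ℝ) (hbH : 0 < bH) (hcH : 0 < cH) (hlo : 0 < lo) :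
    0 < MG bH bL cH cL lo := by
  unfold MG
  have : (0:ℝ) < 1 / ((bH + cH) * lo) := by positivity
  have h := le_max_left (1 / ((bH + cH) * lo)) (1 / ((bL + cL) * lo))
  linarith


set_option maxHeartbeats 1000000 in
theorem one_step_descent (aH aL bH bL cH cL : ℝ)
    (hbH : 0 < bH) (hbL : 0 < bL) (hcH : 0 < cH) (hcL : 0 < cL)
    (lo hi : ℝ) (hlo : 0 < lo) (hlohi : lo ≤ hi)
    (pstar : ℝ × ℝ) (hsne : IsSNE aH aL bH bL cH cL pstar)
    (hstar : InP2 lo hi pstar)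
    (p r : ℝ × ℝ) (hp : InP2 lo hi p) (hr : InP2 lo hi r)
    (eta : ℝ) (heta : 0 ≤ eta) :
    norm2sq (pstar -
        (proj lo hi (p.1 + eta * (bH + cH) * GrH aH aL bH bL cH cL p r),
         proj lo hi (p.2 + eta * (bL + cL) * GrL aH aL bH bL cH cL p r))) ≤
      norm2sq (pstar - p) -
        eta * (2 * calH aH aL bH bL cH cL pstar p -
          eta * (MG bH bL cH cL lo ^ 2 * ((bH + cH) ^ 2 + (bL + cL) ^ 2)) -
          (2 * lr cH cL * (hi - lo) * ((bH + cH) + (bL + cL))) *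
            Real.sqrt (norm2sq (r - p))) := by
  obtain ⟨hp1, hp2⟩ := hp
  obtain ⟨hs1, hs2⟩ := hstar
  have hs1' : 0 < bH + cH := by linarith
  have hs2' : 0 < bL + cL := by linarith
  obtain ⟨hg1b, hg2b⟩ := Gr_abs_le aH aL bH bL cH cL lo hi hbH hbL hcH hcL hlo p r ⟨hp1, hp2⟩
  have hmgpos := MG_pos bH bL cH cL lo hbH hcH hlo
  -- abbreviations (as local definitions via generalize-free `set`)
  set g1 := GrH aH aL bH bL cH cL p r with hg1
  set g2 := GrL aH aL bH bL cH cL p r with hg2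
  set h1 := GrH aH aL bH bL cH cL p p with hh1
  set h2 := GrL aH aL bH bL cH cL p p with hh2
  set mg := MG bH bL cH cL lo with hmg
  -- difference of Gr in r equals difference of demands
  have hGd1 : g1 - h1 = demH aH aL bH bL cH cL p r - demH aH aL bH bL cH cL p p := by
    rw [hg1, hh1]; unfold GrH; ring
  have hGd2 : g2 - h2 = demL aH aL bH bL cH cL p r - demL aH aL bH bL cH cL p p := by
    rw [hg2, hh2]; unfold GrL; ring
  have hcalH : calH aH aL bH bL cH cL pstar p =
      (bH + cH) * h1 * (pstar.1 - p.1) + (bL + cL) * h2 * (pstar.2 - p.2) := rfl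
  clear_value g1 g2 h1 h2 mg
  -- unfold norm2sq in goal
  rw [hcalH]
  simp only [norm2sq, Prod.fst_sub, Prod.snd_sub]
  set S := Real.sqrt ((r.1 - p.1) ^ 2 + (r.2 - p.2) ^ 2) with hS
  have hSnn : 0 ≤ S := Real.sqrt_nonneg _
  have hlrnn : 0 ≤ lr cH cL := by unfold lr; positivity
  set L := lr cH cL * S with hLdef
  have hLnn : 0 ≤ L := mul_nonneg hlrnn hSnn
  -- Cauchy–Schwarz step
  have hcs : cH * |r.1 - p.1| + cL * |r.2 - p.2| ≤
      Real.sqrt (cH ^ 2 + cL ^ 2) * S := by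
    have hsq : (cH * |r.1 - p.1| + cL * |r.2 - p.2|) ^ 2 ≤
        (cH ^ 2 + cL ^ 2) * ((r.1 - p.1) ^ 2 + (r.2 - p.2) ^ 2) := by
      nlinarith [sq_nonneg (cH * |r.2 - p.2| - cL * |r.1 - p.1|), sq_abs (r.1 - p.1),
        sq_abs (r.2 - p.2)]
    have h := Real.sqrt_le_sqrt hsq
    rwa [Real.sqrt_sq (by positivity), Real.sqrt_mul (by positivity), ← hS] at h
  have hLlip : (cH * |r.1 - p.1| + cL * |r.2 - p.2|) / 4 ≤ L := by
    rw [hLdef]; unfold lr; linarith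
  have hd1 : |g1 - h1| ≤ L := by
    rw [hGd1]
    exact le_trans (demH_diff aH aL bH bL cH cL hcH.le hcL.le p r) hLlip
  have hd2 : |g2 - h2| ≤ L := by
    rw [hGd2]
    exact le_trans (demL_diff aH aL bH bL cH cL hcH.le hcL.le p r) hLlip
  -- error size bounds
  have he1b : |pstar.1 - p.1| ≤ hi - lo := by
    rw [abs_le]; constructor
    · linarith [hs1.1, hp1.2]
    · linarith [hs1.2, hp1.1]
  have he2b : |pstar.2 - p.2| ≤ hi - lo := by
    rw [abs_le]; constructor
    · linarith [hs2.1, hp2.2]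
    · linarith [hs2.2, hp2.1]
  -- cross terms
  have hA1 : (h1 - g1) * (pstar.1 - p.1) ≤ L * (hi - lo) := by
    calc (h1 - g1) * (pstar.1 - p.1) ≤ |(h1 - g1) * (pstar.1 - p.1)| := le_abs_self _
      _ = |g1 - h1| * |pstar.1 - p.1| := by rw [abs_mul, abs_sub_comm]
      _ ≤ L * (hi - lo) := mul_le_mul hd1 he1b (abs_nonneg _) hLnn
  have hA2 : (h2 - g2) * (pstar.2 - p.2) ≤ L * (hi - lo) := by
    calc (h2 - g2) * (pstar.2 - p.2) ≤ |(h2 - g2) * (pstar.2 - p.2)| := le_abs_self _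
      _ = |g2 - h2| * |pstar.2 - p.2| := by rw [abs_mul, abs_sub_comm]
      _ ≤ L * (hi - lo) := mul_le_mul hd2 he2b (abs_nonneg _) hLnn
  have key1a : 2 * eta * ((bH + cH) * ((h1 - g1) * (pstar.1 - p.1))) ≤
      2 * eta * ((bH + cH) * (L * (hi - lo))) :=
    mul_le_mul_of_nonneg_left (mul_le_mul_of_nonneg_left hA1 hs1'.le) (by positivity)
  have key1b : 2 * eta * ((bL + cL) * ((h2 - g2) * (pstar.2 - p.2))) ≤
      2 * eta * ((bL + cL) * (L * (hi - lo))) :=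
    mul_le_mul_of_nonneg_left (mul_le_mul_of_nonneg_left hA2 hs2'.le) (by positivity)
  have hg1sq : g1 ^ 2 ≤ mg ^ 2 := sq_le_sq' (abs_le.mp hg1b).1 (abs_le.mp hg1b).2
  have hg2sq : g2 ^ 2 ≤ mg ^ 2 := sq_le_sq' (abs_le.mp hg2b).1 (abs_le.mp hg2b).2
  have key2a : eta ^ 2 * ((bH + cH) ^ 2 * g1 ^ 2) ≤ eta ^ 2 * ((bH + cH) ^ 2 * mg ^ 2) :=
    mul_le_mul_of_nonneg_left (mul_le_mul_of_nonneg_left hg1sq (by positivity)) (by positivity)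
  have key2b : eta ^ 2 * ((bL + cL) ^ 2 * g2 ^ 2) ≤ eta ^ 2 * ((bL + cL) ^ 2 * mg ^ 2) :=
    mul_le_mul_of_nonneg_left (mul_le_mul_of_nonneg_left hg2sq (by positivity)) (by positivity)
  -- projection step
  have F1 := proj_contract lo hi pstar.1 (p.1 + eta * (bH + cH) * g1) hlohi hs1
  have F2 := proj_contract lo hi pstar.2 (p.2 + eta * (bL + cL) * g2) hlohi hs2
  have step1 : (pstar.1 - proj lo hi (p.1 + eta * (bH + cH) * g1)) ^ 2 +
      (pstar.2 - proj lo hi (p.2 + eta * (bL + cL) * g2)) ^ 2 ≤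
      (pstar.1 - (p.1 + eta * (bH + cH) * g1)) ^ 2 +
      (pstar.2 - (p.2 + eta * (bL + cL) * g2)) ^ 2 := by linarith
  refine le_trans step1 ?_
  have expand : (pstar.1 - (p.1 + eta * (bH + cH) * g1)) ^ 2 +
      (pstar.2 - (p.2 + eta * (bL + cL) * g2)) ^ 2 =
      (pstar.1 - p.1) ^ 2 + (pstar.2 - p.2) ^ 2 -
        2 * eta * ((bH + cH) * h1 * (pstar.1 - p.1) + (bL + cL) * h2 * (pstar.2 - p.2)) +
        (2 * eta * ((bH + cH) * ((h1 - g1) * (pstar.1 - p.1))) +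
          2 * eta * ((bL + cL) * ((h2 - g2) * (pstar.2 - p.2)))) +
        (eta ^ 2 * ((bH + cH) ^ 2 * g1 ^ 2) + eta ^ 2 * ((bL + cL) ^ 2 * g2 ^ 2)) := by
    ring
  have target : (pstar.1 - p.1) ^ 2 + (pstar.2 - p.2) ^ 2 -
      eta * (2 * ((bH + cH) * h1 * (pstar.1 - p.1) + (bL + cL) * h2 * (pstar.2 - p.2)) -
        eta * (mg ^ 2 * ((bH + cH) ^ 2 + (bL + cL) ^ 2)) -
        2 * lr cH cL * (hi - lo) * (bH + cH + (bL + cL)) * S) =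
      (pstar.1 - p.1) ^ 2 + (pstar.2 - p.2) ^ 2 -
        2 * eta * ((bH + cH) * h1 * (pstar.1 - p.1) + (bL + cL) * h2 * (pstar.2 - p.2)) +
        (2 * eta * ((bH + cH) * (L * (hi - lo))) +
          2 * eta * ((bL + cL) * (L * (hi - lo)))) +
        (eta ^ 2 * ((bH + cH) ^ 2 * mg ^ 2) + eta ^ 2 * ((bL + cL) ^ 2 * mg ^ 2)) := by
    rw [hLdef]; ring
  linarith [key1a, key1b, key2a, key2b, expand, target]
end
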